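/- arXiv:1604.03163 — 10 statements merged into one kernel-verified Lean document; each statement's English description precedes it below -/
import Mathlib

section
/- Let B be a reflexive Banach space over K (K = ℝ or ℂ), and Φ = (φ_λ)_{λ∈Λ} a family of bounded linear functionals on B. If the phase retrieval map A_Φ sending x to (|φ_λ(x)|)_{λ∈Λ} is injective up to a unimodular scalar (i.e., |φ_λ(x)| = |φ_λ(y)| for all λ implies x = τy for some unimodular τ ∈ K), then Φ satisfies the complement property: for every subset S ⊆ Λ, either every x ∈ B annihilated by all φ_λ with λ ∈ S is zero, or every x ∈ B annihilated by all φ_λ with λ ∈ Λ\S is zero. -/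
/-- If the phase retrieval map of a family `Φ` of bounded linear functionals on a reflexive
Banach space `B` over `K = ℝ` or `ℂ` is injective up to a unimodular scalar, then `Φ`
satisfies the complement property. -/
theorem stmt_0 {K : Type} [RCLike K] {B : Type} [NormedAddCommGroup B] [NormedSpace K B]
    [CompleteSpace B]
    (hrefl : Function.Surjective (NormedSpace.inclusionInDoubleDual K B))
    {Λ : Type} (Φ : Λ → (B →L[K] K))
    (hinj : ∀ x y : B, (∀ l, ‖Φ l x‖ = ‖Φ l y‖) → ∃ τ : K, ‖τ‖ = 1 ∧ x = τ • y) :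
    ∀ S : Set Λ,
      (∀ x : B, (∀ l ∈ S, Φ l x = 0) → x = 0) ∨
      (∀ x : B, (∀ l ∈ Sᶜ, Φ l x = 0) → x = 0) := by
  intro S
  by_contra h
  push_neg at h
  obtain ⟨⟨x, hxS, hx⟩, ⟨y, hyS, hy⟩⟩ := h
  obtain ⟨τ, hτ, heq⟩ := hinj (x + y) (x - y) (by
    intro l
    by_cases hl : l ∈ S
    · simp [hxS l hl]
    · simp [hyS l hl])
  rcases eq_or_ne τ 1 with rfl | hτ1
  · rw [one_smul, sub_eq_add_neg] at heq
    have hyy : y = -y := add_left_cancel heq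
    have : (2 : K) • y = 0 := by
      rw [two_smul]
      nth_rewrite 1 [hyy]
      simp
    rcases smul_eq_zero.mp this with h2 | h0
    · exact absurd h2 (by norm_num)
    · exact hy h0
  · have h1τ : (1 : K) - τ ≠ 0 := sub_ne_zero_of_ne hτ1.symm
    have h1 : ((1 : K) - τ) • x = (-(1 + τ)) • y := by
      rw [sub_smul, neg_smul, add_smul, one_smul, one_smul, smul_sub] at *
      have : x - τ • x = -y - τ • y := by
        have h2 : x + y - y - τ • x = τ • x - τ • y - y - τ • x := by rw [heq]
        calc x - τ • x = x + y - y - τ • x := by abel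
          _ = τ • x - τ • y - y - τ • x := h2
          _ = -y - τ • y := by abel
      rw [this]; abel
    have hxy : x = (((1 : K) - τ)⁻¹ * (-(1 + τ))) • y := by
      have := congrArg (fun z => ((1 : K) - τ)⁻¹ • z) h1
      simpa [smul_smul, inv_mul_cancel₀ h1τ] using this
    have hall : ∀ l, Φ l x = 0 := by
      intro l
      by_cases hl : l ∈ S
      · exact hxS l hl
      · rw [hxy, map_smul, hyS l hl]
        simp
    obtain ⟨τ', _, hx0⟩ := hinj x 0 (by intro l; simp [hall])
    exact hx (by simpa using hx0)
end

section
/- Let B be a Banach space over ℝ and Φ = (φ_λ)_{λ∈Λ} a family of bounded linear functionals on B. Then the map x ↦ (|φ_λ(x)|)_{λ∈Λ} is injective on B/{±1} (i.e., equality of all |φ_λ(x)| and |φ_λ(y)| implies x = y or x = -y) if and only if Φ satisfies the complement property. -/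
/-- For a real Banach space `B`, the phaseless map `x ↦ (|φ_λ(x)|)_λ` is injective up to a
global sign if and only if `Φ` satisfies the complement property. -/
theorem stmt_1 {B : Type} [NormedAddCommGroup B] [NormedSpace ℝ B] [CompleteSpace B]
    {Λ : Type} (Φ : Λ → (B →L[ℝ] ℝ)) :
    (∀ x y : B, (∀ l, |Φ l x| = |Φ l y|) → x = y ∨ x = -y) ↔
      (∀ S : Set Λ,
        (∀ x : B, (∀ l ∈ S, Φ l x = 0) → x = 0) ∨
        (∀ x : B, (∀ l ∈ Sᶜ, Φ l x = 0) → x = 0)) := by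
  constructor
  · intro h S
    by_contra hc
    push_neg at hc
    obtain ⟨⟨x, hx, hx0⟩, ⟨y, hy, hy0⟩⟩ := hc
    have habs : ∀ l, |Φ l (x + y)| = |Φ l (x - y)| := by
      intro l
      by_cases hl : l ∈ S
      · simp [map_add, map_sub, hx l hl]
      · simp [map_add, map_sub, hy l hl]
    rcases h (x + y) (x - y) habs with h1 | h1
    · apply hy0
      have : (2 : ℝ) • y = 0 := by
        have := sub_eq_zero.mpr h1
        simp [two_smul] at this ⊢
        abel_nf at this ⊢
        linear_combination (norm := module) this
      simpa using (smul_eq_zero.mp this).resolve_left (by norm_num)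
    · apply hx0
      have : (2 : ℝ) • x = 0 := by
        rw [neg_sub] at h1
        have := sub_eq_zero.mpr h1
        simp [two_smul] at this ⊢
        abel_nf at this ⊢
        linear_combination (norm := module) this
      simpa using (smul_eq_zero.mp this).resolve_left (by norm_num)
  · intro h x y hxy
    rcases h {l | Φ l x = Φ l y} with h1 | h1
    · left
      have := h1 (x - y) (by intro l hl; simp only [map_sub]; exact sub_eq_zero.mpr hl)
      exact sub_eq_zero.mp this
    · right
      have := h1 (x + y) ?_
      · exact eq_neg_of_add_eq_zero_left this
      intro l hl
      have h2 : Φ l x = -(Φ l y) :=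
        (abs_eq_abs.mp (hxy l)).resolve_left hl
      simp [map_add, h2]
end

section
/- Let Λ ⊆ ℝ and suppose Λ is a sampling sequence (uniqueness set) for the Paley-Wiener space PW^{p/2, 2b}_ℝ, meaning any function in PW^{p/2,2b}_ℝ vanishing on all of Λ is zero. Then the map sending f ∈ PW^{p,b}_ℝ to the family of unsigned samples (|f(λ)|)_{λ∈Λ} is injective up to a global sign: if |f(λ)| = |g(λ)| for all λ ∈ Λ, then f = g or f = -g. -/
/-- If `Λ` is a uniqueness (sampling) set for the Paley–Wiener space `PW^{p/2,2b}_ℝ`, then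
`f ∈ PW^{p,b}_ℝ` is determined by its unsigned samples `(|f(λ)|)_{λ∈Λ}` up to a global sign.
The Paley–Wiener spaces are described by their relevant properties: `PW1` is closed under
sums and differences, each member extends to an entire function, and products of two members
of `PW1` lie in `PW2`. -/
theorem stmt_3 (PW1 PW2 : Set (ℝ → ℝ)) (Λ : Set ℝ)
    (hsub : ∀ f ∈ PW1, ∀ g ∈ PW1, f - g ∈ PW1 ∧ f + g ∈ PW1)
    (hent : ∀ f ∈ PW1, ∃ F : ℂ → ℂ, Differentiable ℂ F ∧ ∀ x : ℝ, F x = f x)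
    (hprod : ∀ f ∈ PW1, ∀ g ∈ PW1, f * g ∈ PW2)
    (hsamp : ∀ h ∈ PW2, (∀ l ∈ Λ, h l = 0) → h = 0) :
    ∀ f ∈ PW1, ∀ g ∈ PW1, (∀ l ∈ Λ, |f l| = |g l|) → f = g ∨ f = -g := by
  intro f hf g hg hfg
  obtain ⟨hd, hs⟩ := hsub f hf g hg
  have hmem := hprod (f - g) hd (f + g) hs
  have hzero : (f - g) * (f + g) = 0 := by
    apply hsamp _ hmem
    intro l hl
    have h1 := hfg l hl
    have h2 : f l ^ 2 = g l ^ 2 := by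
      rw [← sq_abs (f l), ← sq_abs (g l), h1]
    simp only [Pi.mul_apply, Pi.sub_apply, Pi.add_apply]
    nlinarith [h2]
  have hzero' : ∀ x : ℝ, (f x - g x) * (f x + g x) = 0 := by
    intro x
    have := congrFun hzero x
    simpa using this
  by_cases h : f = g
  · exact Or.inl h
  · right
    obtain ⟨a, ha⟩ : ∃ a, f a ≠ g a := by
      by_contra h'; push_neg at h'; exact h (funext h')
    obtain ⟨G, hGdiff, hGeq⟩ := hent (f + g) hs
    obtain ⟨F, hFdiff, hFeq⟩ := hent (f - g) hd
    have hcont : ContinuousAt (fun x : ℝ => F x) a :=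
      (hFdiff.continuous.comp Complex.continuous_ofReal).continuousAt
    have hFa : F a ≠ 0 := by
      rw [hFeq a]
      simp only [Pi.sub_apply]
      exact_mod_cast sub_ne_zero.mpr ha
    have hev : ∀ᶠ x : ℝ in nhds a, F x ≠ 0 := hcont.eventually_ne hFa
    have hev2 : ∀ᶠ x : ℝ in nhds a, G x = 0 := by
      filter_upwards [hev] with x hx
      have hfgx : f x - g x ≠ 0 := by
        intro hc
        apply hx
        rw [hFeq x]
        simp only [Pi.sub_apply]
        exact_mod_cast hc
      have : f x + g x = 0 := by
        rcases mul_eq_zero.mp (hzero' x) with h1 | h1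
        · exact absurd h1 hfgx
        · exact h1
      rw [hGeq x]
      simp only [Pi.add_apply]
      exact_mod_cast this
    have hfreq : ∃ᶠ x : ℝ in nhdsWithin a {a}ᶜ, G x = 0 :=
      (eventually_nhdsWithin_of_eventually_nhds hev2).frequently
    have htend : Filter.Tendsto (fun x : ℝ => (x : ℂ)) (nhdsWithin a {a}ᶜ)
        (nhdsWithin (a : ℂ) {(a : ℂ)}ᶜ) := by
      simp only [nhdsWithin]
      apply Filter.Tendsto.inf
      · exact Complex.continuous_ofReal.continuousAt.tendsto
      · apply Filter.tendsto_principal_principal.mpr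
        intro x hx
        simpa [Complex.ofReal_inj] using hx
    have hfreqC : ∃ᶠ z : ℂ in nhdsWithin (a : ℂ) {(a : ℂ)}ᶜ, G z = 0 :=
      htend.frequently hfreq
    have hG0 : Set.EqOn G 0 Set.univ := by
      apply (Complex.analyticOnNhd_univ_iff_differentiable.mpr hGdiff).eqOn_zero_of_preconnected_of_frequently_eq_zero
        isPreconnected_univ (Set.mem_univ (a : ℂ))
      exact hfreqC
    funext x
    have : G x = 0 := hG0 (Set.mem_univ _)
    rw [hGeq x] at this
    simp only [Pi.add_apply] at this
    have hx : f x + g x = 0 := by exact_mod_cast this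
    simp only [Pi.neg_apply]
    linarith
end

section
/- Let B be a Banach space and Φ a frame for B with associated admissible Banach sequence space 𝔅 (so A‖x‖ ≤ ‖(φ_λ(x))_λ‖_𝔅 ≤ B‖x‖ and a continuous left inverse R exists). If the phaseless measurement map A_Φ : B/~ → 𝔅, x ↦ (|φ_λ(x)|)_λ is injective, then its inverse A_Φ^{-1} is continuous on the range of A_Φ. -/
/-!
If the inverse were not continuous at `x`, there would be `y n` with `|Φ (y n)| → |Φ x|` in `E`
staying `ε` away from every `τ • x`. Since `|Φ x|` has small norm outside some compact `S`, so do
the coefficients of all but finitely many `y n`; on `S` the functionals `Φ l` are uniformly close to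
finitely many of them, so there the coefficients are almost finite-dimensional. Hence the
coefficient sequence is totally bounded in `E`, a subsequence converges, and applying `R` gives a
limit `z` of that subsequence of `y` with `|Φ z| = |Φ x|`, i.e. `z = τ • x`: a contradiction.
-/

open scoped BigOperators

/-- An admissible Banach space `E` of `K`-valued families over `Λ`, given by a linear
embedding into `Λ → K`, which is solid, norm-determined by absolute values, contains
indicators of compact sets, and in which compactly supported elements are dense. -/
structure AdmissibleEmbedding (K : Type) [RCLike K] (Λ : Type) [TopologicalSpace Λ]
    (E : Type) [NormedAddCommGroup E] [NormedSpace K E] where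
  emb : E →ₗ[K] (Λ → K)
  inj : Function.Injective emb
  solid_exists : ∀ (w : Λ → K) (z : E), (∀ l, ‖w l‖ ≤ ‖emb z l‖) →
    ∃ w' : E, emb w' = w ∧ ‖w'‖ ≤ ‖z‖
  norm_abs : ∀ w w' : E, (∀ l, ‖emb w l‖ = ‖emb w' l‖) → ‖w‖ = ‖w'‖
  indicator_mem : ∀ Λ' : Set Λ, IsCompact Λ' → ∃ e : E, emb e = Λ'.indicator (fun _ => (1 : K))
  dense_compact : Dense {e : E | ∃ Λ' : Set Λ, IsCompact Λ' ∧ ∀ l, l ∉ Λ' → emb e l = 0}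

/-- A Banach frame `Φ = (φ_λ)` for `B` with associated admissible space `E`:
frame inequalities, a continuous reconstruction operator, and distinguished elements of `E`
representing the coefficient family, the phaseless coefficient family, and restricted
coefficient families. -/
structure BanachFramePR (K : Type) [RCLike K] (Λ : Type) [TopologicalSpace Λ]
    (B : Type) [NormedAddCommGroup B] [NormedSpace K B]
    (E : Type) [NormedAddCommGroup E] [NormedSpace K E]
    (adm : AdmissibleEmbedding K Λ E) where
  Φ : Λ → (B →L[K] K)
  contΦ : Continuous Φ
  coeff : B → E
  coeff_spec : ∀ x l, adm.emb (coeff x) l = Φ l x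
  absCoeff : B → E
  absCoeff_spec : ∀ x l, adm.emb (absCoeff x) l = (‖Φ l x‖ : K)
  restrict : Set Λ → B → E
  restrict_spec : ∀ (S : Set Λ) x l, adm.emb (restrict S x) l = S.indicator (fun l => Φ l x) l
  A : ℝ
  C : ℝ
  hA : 0 < A
  hAC : A ≤ C
  lower : ∀ x, A * ‖x‖ ≤ ‖coeff x‖
  upper : ∀ x, ‖coeff x‖ ≤ C * ‖x‖
  recon : E → B
  recon_cont : Continuous recon
  recon_left : ∀ x, recon (coeff x) = x

/-- The quotient distance `d(x,y) = inf_{|τ|=1} ‖x - τ • y‖`. -/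
noncomputable def phaseDist (K : Type) [RCLike K] {B : Type} [NormedAddCommGroup B]
    [NormedSpace K B] (x y : B) : ℝ :=
  sInf {r : ℝ | ∃ τ : K, ‖τ‖ = 1 ∧ r = ‖x - τ • y‖}

open Filter Topology Set

lemma exists_finite_cover_ball_image {α X Y : Type*} [PseudoMetricSpace X] [PseudoMetricSpace Y]
    {s : Set α} {f : α → X} {g : α → Y} {δ ε : ℝ} (hf : TotallyBounded (f '' s)) (hδ : 0 < δ)
    (hfg : ∀ a ∈ s, ∀ b ∈ s, dist (f a) (f b) < δ → dist (g a) (g b) < ε) :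
    ∃ t : Set Y, t.Finite ∧ g '' s ⊆ ⋃ y ∈ t, Metric.ball y ε := by
  obtain ⟨u, hus, huf, hcov⟩ :=
    Set.exists_subset_image_finite_and.1 (Metric.finite_approx_of_totallyBounded hf δ hδ)
  refine ⟨g '' u, huf.image g, ?_⟩
  rintro _ ⟨a, ha, rfl⟩
  obtain ⟨_, ⟨b, hb, rfl⟩, hab⟩ := mem_iUnion₂.1 (hcov ⟨a, ha, rfl⟩)
  exact mem_iUnion₂.2 ⟨g b, ⟨b, hb, rfl⟩, hfg a ha b (hus hb) hab⟩

lemma ContinuousLinearMap.norm_apply_sub_apply_le {𝕜 V W : Type*} [NontriviallyNormedField 𝕜]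
    [SeminormedAddCommGroup V] [SeminormedAddCommGroup W] [NormedSpace 𝕜 V] [NormedSpace 𝕜 W]
    (f g : V →L[𝕜] W) (a b : V) :
    ‖f a - f b‖ ≤ ‖g a - g b‖ + ‖f - g‖ * (‖a‖ + ‖b‖) := by
  have hsplit : f a - f b = (g a - g b) + ((f - g) a - (f - g) b) := by
    simp only [FunLike.coe_sub, Pi.sub_apply]; abel
  calc ‖f a - f b‖ ≤ ‖g a - g b‖ + (‖(f - g) a‖ + ‖(f - g) b‖) := by
        rw [hsplit]; exact (norm_add_le _ _).trans (by gcongr; exact norm_sub_le _ _)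
    _ ≤ ‖g a - g b‖ + ‖f - g‖ * (‖a‖ + ‖b‖) := by
        rw [mul_add]; gcongr <;> exact (f - g).le_opNorm _

namespace AdmissibleEmbedding

variable {K Λ E : Type} [RCLike K] [TopologicalSpace Λ] [NormedAddCommGroup E] [NormedSpace K E]

lemma norm_le_of_forall_norm_le (adm : AdmissibleEmbedding K Λ E) {w z : E}
    (h : ∀ l, ‖adm.emb w l‖ ≤ ‖adm.emb z l‖) : ‖w‖ ≤ ‖z‖ := by
  obtain ⟨w', hw', hle⟩ := adm.solid_exists _ z h
  rwa [adm.inj hw'] at hle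

lemma exists_abs (adm : AdmissibleEmbedding K Λ E) (e : E) :
    ∃ a : E, adm.emb a = (fun l => (‖adm.emb e l‖ : K)) ∧ ‖a‖ = ‖e‖ := by
  obtain ⟨a, ha, -⟩ := adm.solid_exists (fun l => (‖adm.emb e l‖ : K)) e (by simp)
  exact ⟨a, ha, adm.norm_abs a e (by simp [ha])⟩

end AdmissibleEmbedding

namespace BanachFramePR

variable {K Λ B E : Type} [RCLike K] [TopologicalSpace Λ] [NormedAddCommGroup B] [NormedSpace K B]
  [NormedAddCommGroup E] [NormedSpace K E] {adm : AdmissibleEmbedding K Λ E}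
  (F : BanachFramePR K Λ B E adm)

lemma norm_emb_absCoeff_sub (x y : B) (l : Λ) :
    ‖adm.emb (F.absCoeff y - F.absCoeff x) l‖ = |‖F.Φ l y‖ - ‖F.Φ l x‖| := by
  rw [map_sub, Pi.sub_apply, F.absCoeff_spec, F.absCoeff_spec, ← RCLike.ofReal_sub,
    RCLike.norm_ofReal]

lemma norm_absCoeff (y : B) : ‖F.absCoeff y‖ = ‖F.coeff y‖ :=
  adm.norm_abs _ _ fun l => by rw [F.absCoeff_spec, F.coeff_spec, RCLike.norm_ofReal, abs_norm]

lemma lower_absCoeff (y : B) : F.A * ‖y‖ ≤ ‖F.absCoeff y‖ :=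
  F.norm_absCoeff y ▸ F.lower y

lemma norm_absCoeff_sub_le (y y' : B) :
    ‖F.absCoeff y - F.absCoeff y'‖ ≤ F.C * ‖y - y'‖ := by
  refine (adm.norm_le_of_forall_norm_le fun l => ?_).trans (F.upper (y - y'))
  rw [norm_emb_absCoeff_sub, F.coeff_spec, map_sub]
  exact abs_norm_sub_norm_le _ _

lemma continuous_absCoeff : Continuous F.absCoeff :=
  (LipschitzWith.of_dist_le' fun y y' => by
    simpa only [dist_eq_norm] using F.norm_absCoeff_sub_le y y').continuous

lemma abs_apply_eq_of_absCoeff_eq {x y : B} (h : F.absCoeff y = F.absCoeff x) (l : Λ) :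
    ‖F.Φ l y‖ = ‖F.Φ l x‖ := by
  simpa [F.absCoeff_spec] using congrFun (congrArg adm.emb h) l

lemma dist_coeff_restrict (S : Set Λ) (y : B) :
    dist (F.coeff y) (F.restrict S y) = ‖F.restrict Sᶜ y‖ := by
  rw [dist_eq_norm]
  congr 1
  refine adm.inj (funext fun l => ?_)
  by_cases hl : l ∈ S <;> simp [F.coeff_spec, F.restrict_spec, hl]

lemma exists_isCompact_norm_restrict_compl_lt (x : B) {η : ℝ} (hη : 0 < η) :
    ∃ S, IsCompact S ∧ ‖F.restrict Sᶜ x‖ < η := by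
  obtain ⟨e, ⟨S, hS, he⟩, hxe⟩ := adm.dense_compact.exists_dist_lt (F.coeff x) hη
  refine ⟨S, hS, lt_of_le_of_lt (adm.norm_le_of_forall_norm_le fun l => ?_)
    (by rwa [← dist_eq_norm])⟩
  by_cases hl : l ∈ S <;> simp [F.restrict_spec, F.coeff_spec, hl, he]

-- The triangle inequality is applied to the moduli of the two restrictions, which lie in `E` by
-- solidity.
lemma norm_restrict_le (S : Set Λ) (x y : B) :
    ‖F.restrict S y‖ ≤ ‖F.restrict S x‖ + ‖F.absCoeff y - F.absCoeff x‖ := by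
  obtain ⟨a, ha, hna⟩ := adm.exists_abs (F.restrict S y)
  obtain ⟨b, hb, hnb⟩ := adm.exists_abs (F.restrict S x)
  have hab : ‖a - b‖ ≤ ‖F.absCoeff y - F.absCoeff x‖ := by
    refine adm.norm_le_of_forall_norm_le fun l => ?_
    rw [norm_emb_absCoeff_sub, map_sub, ha, hb]
    by_cases hl : l ∈ S
    · simp only [Pi.sub_apply, F.restrict_spec, indicator_of_mem hl, ← RCLike.ofReal_sub,
        RCLike.norm_ofReal, le_refl]
    · simp [F.restrict_spec, hl]
  rw [← hna, ← hnb]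
  exact (norm_le_insert' a b).trans (by gcongr)

lemma norm_restrict_sub_le {S : Set Λ} {eS : E} (heS : adm.emb eS = S.indicator fun _ => 1)
    {M : ℝ} (hM : 0 ≤ M) {y y' : B} (h : ∀ l ∈ S, ‖F.Φ l y - F.Φ l y'‖ ≤ M) :
    ‖F.restrict S y - F.restrict S y'‖ ≤ M * ‖eS‖ := by
  calc ‖F.restrict S y - F.restrict S y'‖ ≤ ‖(M : K) • eS‖ := by
        refine adm.norm_le_of_forall_norm_le fun l => ?_
        by_cases hl : l ∈ S
        · simpa [F.restrict_spec, heS, hl, abs_of_nonneg hM] using h l hl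
        · simp [F.restrict_spec, heS, hl]
    _ = M * ‖eS‖ := by rw [norm_smul, RCLike.norm_ofReal, abs_of_nonneg hM]

-- On a compact `S` the functionals `Φ l` are uniformly close to finitely many functionals, so
-- `restrict S` is approximated by a map into a finite-dimensional space.
lemma totallyBounded_image_restrict {S : Set Λ} (hS : IsCompact S) {s : Set B}
    (hs : Bornology.IsBounded s) : TotallyBounded (F.restrict S '' s) := by
  obtain ⟨eS, heS⟩ := adm.indicator_mem S hS
  obtain ⟨R, hR, hsR⟩ := hs.exists_pos_norm_le
  refine Metric.totallyBounded_iff.2 fun ε hε => ?_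
  set κ := ε / (‖eS‖ + 1)
  have hκ : 0 < κ := by positivity
  have hκε : κ * ‖eS‖ < ε := by
    rw [div_mul_eq_mul_div, div_lt_iff₀ (by positivity)]
    nlinarith
  obtain ⟨t, ht, hcov⟩ :=
    Metric.totallyBounded_iff.1 (hS.image F.contΦ).totallyBounded (κ / (4 * R)) (by positivity)
  have := ht.fintype
  let P : B →L[K] (t → K) := ContinuousLinearMap.pi fun φ => (φ : B →L[K] K)
  have hP : TotallyBounded (P '' s) :=
    ((P.lipschitz.isBounded_image hs).isCompact_closure.totallyBounded).subset subset_closure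
  refine exists_finite_cover_ball_image hP (half_pos hκ) fun a ha b hb hab => ?_
  rw [dist_eq_norm]
  refine lt_of_le_of_lt (F.norm_restrict_sub_le heS hκ.le fun l hl => ?_) hκε
  obtain ⟨φ, hφ, hlφ⟩ := mem_iUnion₂.1 (hcov (mem_image_of_mem _ hl))
  have hφab : ‖φ a - φ b‖ < κ / 2 := by
    rw [← dist_eq_norm]; exact (dist_le_pi_dist (P a) (P b) ⟨φ, hφ⟩).trans_lt hab
  have hlφ' : ‖F.Φ l - φ‖ * (‖a‖ + ‖b‖) ≤ κ / (4 * R) * (2 * R) := by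
    rw [← dist_eq_norm]
    gcongr
    · exact (Metric.mem_ball.1 hlφ).le
    · linarith [hsR a ha, hsR b hb]
  calc ‖F.Φ l a - F.Φ l b‖ ≤ ‖φ a - φ b‖ + ‖F.Φ l - φ‖ * (‖a‖ + ‖b‖) :=
        (F.Φ l).norm_apply_sub_apply_le φ a b
    _ ≤ κ / 2 + κ / (4 * R) * (2 * R) := add_le_add hφab.le hlφ'
    _ = κ := by field_simp; ring

lemma totallyBounded_range_coeff {x : B} {y : ℕ → B}
    (hy : Tendsto (fun n => F.absCoeff (y n)) atTop (𝓝 (F.absCoeff x))) :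
    TotallyBounded (range fun n => F.coeff (y n)) := by
  have hbdd : Bornology.IsBounded (range y) := by
    obtain ⟨R, hR⟩ := (Metric.isBounded_range_of_tendsto _ hy).exists_norm_le
    refine isBounded_iff_forall_norm_le.2 ⟨R / F.A, ?_⟩
    rintro _ ⟨n, rfl⟩
    rw [le_div_iff₀ F.hA, mul_comm]
    exact (F.lower_absCoeff (y n)).trans (hR _ (mem_range_self n))
  refine Metric.totallyBounded_iff.2 fun ε hε => ?_
  obtain ⟨S, hS, hSx⟩ := F.exists_isCompact_norm_restrict_compl_lt x (by positivity : 0 < ε / 4)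
  obtain ⟨N, hN⟩ := Metric.tendsto_atTop.1 hy (ε / 4) (by positivity)
  obtain ⟨t, ht, hnet⟩ :=
    Metric.totallyBounded_iff.1 (F.totallyBounded_image_restrict hS hbdd) (ε / 2) (by positivity)
  refine ⟨t ∪ (fun n => F.coeff (y n)) '' Iio N, ht.union ((finite_Iio N).image _), ?_⟩
  rintro _ ⟨n, rfl⟩
  rcases lt_or_ge n N with hn | hn
  · exact mem_iUnion₂.2 ⟨_, Or.inr (mem_image_of_mem _ hn), Metric.mem_ball_self hε⟩
  obtain ⟨c, hc, hnc⟩ := mem_iUnion₂.1 (hnet (mem_image_of_mem _ (mem_range_self n)))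
  refine mem_iUnion₂.2 ⟨c, Or.inl hc, ?_⟩
  have htail : ‖F.restrict Sᶜ (y n)‖ < ε / 2 := by
    have := hN n hn
    rw [dist_eq_norm] at this
    linarith [F.norm_restrict_le Sᶜ x (y n)]
  calc dist (F.coeff (y n)) c
        ≤ dist (F.coeff (y n)) (F.restrict S (y n)) + dist (F.restrict S (y n)) c :=
        dist_triangle _ _ _
    _ < ε / 2 + ε / 2 := by
        rw [dist_coeff_restrict]; exact add_lt_add htail (Metric.mem_ball.1 hnc)
    _ = ε := add_halves ε

lemma exists_subseq_tendsto_smul [CompleteSpace E]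
    (hinj : ∀ x y : B, (∀ l, ‖F.Φ l x‖ = ‖F.Φ l y‖) → ∃ τ : K, ‖τ‖ = 1 ∧ x = τ • y)
    {x : B} {y : ℕ → B} (hy : Tendsto (fun n => F.absCoeff (y n)) atTop (𝓝 (F.absCoeff x))) :
    ∃ τ : K, ‖τ‖ = 1 ∧ ∃ φ : ℕ → ℕ, StrictMono φ ∧ Tendsto (y ∘ φ) atTop (𝓝 (τ • x)) := by
  obtain ⟨w, -, φ, hφ, hw⟩ := ((F.totallyBounded_range_coeff hy).closure.isCompact_of_isClosed
    isClosed_closure).tendsto_subseq fun n => subset_closure (mem_range_self n)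
  have hz : Tendsto (y ∘ φ) atTop (𝓝 (F.recon w)) :=
    ((F.recon_cont.tendsto w).comp hw).congr fun k => F.recon_left _
  have habs : F.absCoeff (F.recon w) = F.absCoeff x :=
    tendsto_nhds_unique ((F.continuous_absCoeff.tendsto _).comp hz) (hy.comp hφ.tendsto_atTop)
  obtain ⟨τ, hτ, hzx⟩ := hinj _ x (F.abs_apply_eq_of_absCoeff_eq habs)
  exact ⟨τ, hτ, φ, hφ, hzx ▸ hz⟩

end BanachFramePR

lemma phaseDist_le {K B : Type} [RCLike K] [NormedAddCommGroup B] [NormedSpace K B] (x y : B)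
    {τ : K} (hτ : ‖τ‖ = 1) : phaseDist K x y ≤ ‖x - τ • y‖ :=
  csInf_le ⟨0, by rintro _ ⟨σ, -, rfl⟩; positivity⟩ ⟨τ, hτ, rfl⟩

theorem stmt_4_general {K Λ B E : Type} [RCLike K] [TopologicalSpace Λ]
    [NormedAddCommGroup B] [NormedSpace K B]
    [NormedAddCommGroup E] [NormedSpace K E] [CompleteSpace E]
    (adm : AdmissibleEmbedding K Λ E) (F : BanachFramePR K Λ B E adm)
    (hinj : ∀ x y : B, (∀ l, ‖F.Φ l x‖ = ‖F.Φ l y‖) → ∃ τ : K, ‖τ‖ = 1 ∧ x = τ • y) :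
    ∀ x : B, ∀ ε : ℝ, 0 < ε → ∃ δ : ℝ, 0 < δ ∧ ∀ y : B,
      ‖F.absCoeff y - F.absCoeff x‖ < δ → phaseDist K y x < ε := by
  intro x ε hε
  by_contra! hfar
  choose y hy hyε using fun n : ℕ => hfar (1 / (n + 1)) Nat.one_div_pos_of_nat
  have hlim : Tendsto (fun n => F.absCoeff (y n)) atTop (𝓝 (F.absCoeff x)) :=
    tendsto_iff_norm_sub_tendsto_zero.2 <| squeeze_zero (fun _ => norm_nonneg _)
      (fun n => (hy n).le) tendsto_one_div_add_atTop_nhds_zero_nat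
  obtain ⟨τ, hτ, φ, -, hφ⟩ := F.exists_subseq_tendsto_smul hinj hlim
  obtain ⟨k, hk⟩ := Metric.tendsto_atTop.1 hφ ε hε
  have hclose := hk k le_rfl
  rw [Function.comp_apply, dist_eq_norm] at hclose
  exact (hyε (φ k)).not_gt ((phaseDist_le _ _ hτ).trans_lt hclose)

/-- Weak stability: if the phaseless measurement map of a Banach frame is injective up
to a unimodular scalar, then its inverse is continuous on its range. -/
theorem stmt_4 {K Λ B E : Type} [RCLike K] [TopologicalSpace Λ] [SigmaCompactSpace Λ]
    [NormedAddCommGroup B] [NormedSpace K B] [CompleteSpace B]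
    [NormedAddCommGroup E] [NormedSpace K E] [CompleteSpace E]
    (adm : AdmissibleEmbedding K Λ E) (F : BanachFramePR K Λ B E adm)
    (hinj : ∀ x y : B, (∀ l, ‖F.Φ l x‖ = ‖F.Φ l y‖) → ∃ τ : K, ‖τ‖ = 1 ∧ x = τ • y) :
    ∀ x : B, ∀ ε : ℝ, 0 < ε → ∃ δ : ℝ, 0 < δ ∧ ∀ y : B,
      ‖F.absCoeff y - F.absCoeff x‖ < δ → phaseDist K y x < ε :=
  stmt_4_general adm F hinj
end

section
/- Let B be a real Banach space and Φ a Banach frame for B with admissible solid space 𝔅. Let σ_Φ be the supremal σ such that for every S ⊆ Λ, max(A_{Φ_S}, A_{Φ_{Λ\S}}) ≥ σ (strong complement property constant), and let α_Φ be the optimal lower Lipschitz constant of the phaseless map A_Φ with respect to the quotient metric. Then σ_Φ ≤ α_Φ ≤ 2σ_Φ. -/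
open scoped BigOperators

/- ======================= auxiliary lemmas ======================= -/

lemma min_abs_eq (a b : ℝ) : |(|a| - |b|)| = min |a - b| |a + b| := by
  apply le_antisymm
  · apply le_min (abs_abs_sub_abs_le_abs_sub a b)
    have := abs_abs_sub_abs_le_abs_sub a (-b)
    simpa [sub_neg_eq_add] using this
  · rcases le_total 0 a with ha|ha <;> rcases le_total 0 b with hb|hb
    · simp only [abs_of_nonneg ha, abs_of_nonneg hb]; exact min_le_left _ _
    · simp only [abs_of_nonneg ha, abs_of_nonpos hb, sub_neg_eq_add]; exact min_le_right _ _
    · simp only [abs_of_nonpos ha, abs_of_nonneg hb]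
      have h : -a - b = -(a+b) := by ring
      rw [h, abs_neg]; exact min_le_right _ _
    · simp only [abs_of_nonpos ha, abs_of_nonpos hb]
      have h : -a - -b = -(a-b) := by ring
      rw [h, abs_neg]; exact min_le_left _ _

lemma phaseDist_real {B : Type} [NormedAddCommGroup B] [NormedSpace ℝ B] (x y : B) :
    phaseDist ℝ x y = min ‖x - y‖ ‖x + y‖ := by
  have hset : {r : ℝ | ∃ τ : ℝ, ‖τ‖ = 1 ∧ r = ‖x - τ • y‖} = {‖x - y‖, ‖x + y‖} := by
    ext r
    constructor
    · rintro ⟨τ, hτ, rfl⟩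
      rw [Real.norm_eq_abs] at hτ
      rcases (abs_eq (by norm_num : (0:ℝ) ≤ 1)).mp hτ with h|h
      · left; rw [h, one_smul]
      · right; rw [h, neg_smul, one_smul, sub_neg_eq_add]; rfl
    · rintro (rfl|rfl)
      · exact ⟨1, by norm_num, by rw [one_smul]⟩
      · exact ⟨-1, by norm_num, by rw [neg_smul, one_smul, sub_neg_eq_add]⟩
  rw [phaseDist, hset, csInf_pair]

section helpers

variable {Λ B E : Type} [TopologicalSpace Λ]
    [NormedAddCommGroup B] [NormedSpace ℝ B]
    [NormedAddCommGroup E] [NormedSpace ℝ E]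

lemma solid_mono (adm : AdmissibleEmbedding ℝ Λ E) {u v : E}
    (h : ∀ l, ‖adm.emb u l‖ ≤ ‖adm.emb v l‖) : ‖u‖ ≤ ‖v‖ := by
  obtain ⟨w, hw, hn⟩ := adm.solid_exists (adm.emb u) v h
  rwa [adm.inj hw] at hn

variable {adm : AdmissibleEmbedding ℝ Λ E} (F : BanachFramePR ℝ Λ B E adm)

lemma restrict_zero (S : Set Λ) : F.restrict S 0 = 0 := by
  apply adm.inj
  funext l
  rw [F.restrict_spec, map_zero]
  simp [Set.indicator_apply]

lemma restrict_smul (S : Set Λ) (c : ℝ) (x : B) :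
    F.restrict S (c • x) = c • F.restrict S x := by
  apply adm.inj
  rw [map_smul]
  funext l
  rw [Pi.smul_apply, F.restrict_spec, F.restrict_spec]
  by_cases hl : l ∈ S
  · rw [Set.indicator_of_mem hl, Set.indicator_of_mem hl, map_smul]
  · rw [Set.indicator_of_notMem hl, Set.indicator_of_notMem hl, smul_zero]

lemma absCoeff_sub_apply (x y : B) (l : Λ) :
    adm.emb (F.absCoeff x - F.absCoeff y) l = ‖F.Φ l x‖ - ‖F.Φ l y‖ := by
  rw [map_sub, Pi.sub_apply, F.absCoeff_spec, F.absCoeff_spec]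
  rfl

/-- The admissible set defining `lb S`. -/
def lbSet (S : Set Λ) : Set ℝ := {a : ℝ | 0 ≤ a ∧ ∀ x : B, a * ‖x‖ ≤ ‖F.restrict S x‖}

lemma lbSet_zero_mem (S : Set Λ) : (0:ℝ) ∈ lbSet F S :=
  ⟨le_rfl, fun x => by simpa using norm_nonneg (F.restrict S x)⟩

lemma lb_nonneg (S : Set Λ) : 0 ≤ sSup (lbSet F S) :=
  Real.sSup_nonneg (fun _ ha => ha.1)

lemma lb_mul_le (S : Set Λ) (x : B) : sSup (lbSet F S) * ‖x‖ ≤ ‖F.restrict S x‖ := by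
  rcases eq_or_ne x 0 with rfl|hx
  · rw [restrict_zero]
    simp
  · have hxpos : 0 < ‖x‖ := norm_pos_iff.mpr hx
    rw [← le_div_iff₀ hxpos]
    apply csSup_le ⟨0, lbSet_zero_mem F S⟩
    intro a ha
    exact (le_div_iff₀ hxpos).mpr (ha.2 x)

end helpers

/-- Real case: the strong complement property constant `σ_Φ` and the optimal lower
Lipschitz constant `α_Φ` of the phaseless map satisfy `σ_Φ ≤ α_Φ ≤ 2σ_Φ`. -/
theorem stmt_6 {Λ B E : Type} [TopologicalSpace Λ]
    [NormedAddCommGroup B] [NormedSpace ℝ B] [CompleteSpace B]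
    [NormedAddCommGroup E] [NormedSpace ℝ E] [CompleteSpace E]
    (adm : AdmissibleEmbedding ℝ Λ E) (F : BanachFramePR ℝ Λ B E adm) :
    let lb : Set Λ → ℝ := fun S =>
      sSup {a : ℝ | 0 ≤ a ∧ ∀ x : B, a * ‖x‖ ≤ ‖F.restrict S x‖}
    let σ : ℝ := sSup {s : ℝ | 0 ≤ s ∧ ∀ S : Set Λ, s ≤ max (lb S) (lb Sᶜ)}
    let α : ℝ := sSup {a : ℝ | 0 ≤ a ∧
      ∀ x y : B, a * phaseDist ℝ x y ≤ ‖F.absCoeff x - F.absCoeff y‖}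
    σ ≤ α ∧ α ≤ 2 * σ := by
  intro lb σ α
  have hlb : ∀ S : Set Λ, lb S = sSup (lbSet F S) := fun _ => rfl
  set σSet : Set ℝ := {s : ℝ | 0 ≤ s ∧ ∀ S : Set Λ, s ≤ max (lb S) (lb Sᶜ)} with hσSet
  set αSet : Set ℝ := {a : ℝ | 0 ≤ a ∧
      ∀ x y : B, a * phaseDist ℝ x y ≤ ‖F.absCoeff x - F.absCoeff y‖} with hαSet
  have hσ : σ = sSup σSet := rfl
  have hα : α = sSup αSet := rfl
  have σ_bdd : BddAbove σSet := ⟨max (lb ∅) (lb ∅ᶜ), fun s hs => hs.2 ∅⟩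
  have σ_mem0 : (0:ℝ) ∈ σSet :=
    ⟨le_rfl, fun S => le_trans (by rw [hlb]; exact lb_nonneg F S) (le_max_left _ _)⟩
  have α_mem0 : (0:ℝ) ∈ αSet :=
    ⟨le_rfl, fun x y => by simpa using norm_nonneg (F.absCoeff x - F.absCoeff y)⟩
  by_cases htriv : ∀ x : B, x = 0
  · -- trivial space
    have hlb0 : ∀ S : Set Λ, lb S = 0 := by
      intro S
      rw [hlb]
      apply Real.sSup_of_not_bddAbove
      rintro ⟨b, hb⟩
      have hmem : ∀ a : ℝ, 0 ≤ a → a ∈ lbSet F S := by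
        intro a ha
        refine ⟨ha, fun x => ?_⟩
        rw [htriv x]
        simpa using norm_nonneg (F.restrict S 0)
      have h1 := hb (hmem (max b 0 + 1) (by positivity))
      have h2 : b ≤ max b 0 := le_max_left _ _
      linarith
    have hσ0 : σ = 0 := by
      apply le_antisymm
      · rw [hσ]
        apply csSup_le ⟨0, σ_mem0⟩
        intro s hs
        have h := hs.2 ∅
        rw [hlb0, hlb0] at h
        simpa using h
      · rw [hσ]; exact le_csSup σ_bdd σ_mem0
    have hα0 : α = 0 := by
      rw [hα]
      apply Real.sSup_of_not_bddAbove
      rintro ⟨b, hb⟩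
      have hmem : ∀ a : ℝ, 0 ≤ a → a ∈ αSet := by
        intro a ha
        refine ⟨ha, fun x y => ?_⟩
        rw [htriv x, htriv y, phaseDist_real]
        simpa using norm_nonneg (F.absCoeff 0 - F.absCoeff 0)
      have h1 := hb (hmem (max b 0 + 1) (by positivity))
      have h2 : b ≤ max b 0 := le_max_left _ _
      linarith
    rw [hσ0, hα0]; norm_num
  · push_neg at htriv
    obtain ⟨x₀, hx₀⟩ := htriv
    have hx₀pos : 0 < ‖x₀‖ := norm_pos_iff.mpr hx₀
    have α_bdd : BddAbove αSet := by
      refine ⟨‖F.absCoeff x₀ - F.absCoeff 0‖ / ‖x₀‖, fun a ha => ?_⟩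
      have h := ha.2 x₀ 0
      rw [phaseDist_real] at h
      simp only [sub_zero, add_zero, min_self] at h
      exact (le_div_iff₀ hx₀pos).mpr h
    have lb_bdd : ∀ S : Set Λ, BddAbove (lbSet F S) := fun S =>
      ⟨‖F.restrict S x₀‖ / ‖x₀‖, fun a ha => (le_div_iff₀ hx₀pos).mpr (ha.2 x₀)⟩
    constructor
    · -- σ ≤ α
      rw [hσ, hα]
      apply csSup_le ⟨0, σ_mem0⟩
      intro s hs
      apply le_csSup α_bdd
      refine ⟨hs.1, fun x y => ?_⟩
      set S : Set Λ := {l | ‖F.Φ l (x - y)‖ ≤ ‖F.Φ l (x + y)‖} with hS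
      have habs : ∀ l, ‖adm.emb (F.absCoeff x - F.absCoeff y) l‖ =
          min ‖F.Φ l (x - y)‖ ‖F.Φ l (x + y)‖ := by
        intro l
        rw [absCoeff_sub_apply, map_sub, map_add]
        simp only [Real.norm_eq_abs]
        exact min_abs_eq _ _
      have h1 : ‖F.restrict S (x - y)‖ ≤ ‖F.absCoeff x - F.absCoeff y‖ := by
        apply solid_mono adm
        intro l
        rw [habs, F.restrict_spec]
        by_cases hl : l ∈ S
        · rw [Set.indicator_of_mem hl]
          exact le_min le_rfl hl
        · rw [Set.indicator_of_notMem hl, norm_zero]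
          exact le_min (norm_nonneg _) (norm_nonneg _)
      have h2 : ‖F.restrict Sᶜ (x + y)‖ ≤ ‖F.absCoeff x - F.absCoeff y‖ := by
        apply solid_mono adm
        intro l
        rw [habs, F.restrict_spec]
        by_cases hl : l ∈ Sᶜ
        · rw [Set.indicator_of_mem hl]
          have hnl : ¬ (‖F.Φ l (x - y)‖ ≤ ‖F.Φ l (x + y)‖) := hl
          exact le_min (le_of_not_ge hnl) le_rfl
        · rw [Set.indicator_of_notMem hl, norm_zero]
          exact le_min (norm_nonneg _) (norm_nonneg _)
      rw [phaseDist_real]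
      rcases le_max_iff.mp (hs.2 S) with h|h
      · calc s * min ‖x - y‖ ‖x + y‖ ≤ s * ‖x - y‖ :=
              mul_le_mul_of_nonneg_left (min_le_left _ _) hs.1
          _ ≤ lb S * ‖x - y‖ := mul_le_mul_of_nonneg_right h (norm_nonneg _)
          _ ≤ ‖F.restrict S (x - y)‖ := by rw [hlb]; exact lb_mul_le F S (x - y)
          _ ≤ _ := h1
      · calc s * min ‖x - y‖ ‖x + y‖ ≤ s * ‖x + y‖ :=
              mul_le_mul_of_nonneg_left (min_le_right _ _) hs.1
          _ ≤ lb Sᶜ * ‖x + y‖ := mul_le_mul_of_nonneg_right h (norm_nonneg _)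
          _ ≤ ‖F.restrict Sᶜ (x + y)‖ := by rw [hlb]; exact lb_mul_le F Sᶜ (x + y)
          _ ≤ _ := h2
    · -- α ≤ 2σ
      rw [hα]
      apply csSup_le ⟨0, α_mem0⟩
      intro a ha
      have hmem : a/2 ∈ σSet := by
        refine ⟨by linarith [ha.1], fun S => ?_⟩
        have key : ∀ u v : B, a * min ‖u‖ ‖v‖ ≤ ‖F.restrict S u‖ + ‖F.restrict Sᶜ v‖ := by
          intro u v
          have hd := ha.2 (u + v) (u - v)
          rw [phaseDist_real] at hd
          have e1 : (u + v) - (u - v) = (2:ℝ) • v := by rw [two_smul]; abel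
          have e2 : (u + v) + (u - v) = (2:ℝ) • u := by rw [two_smul]; abel
          have hn2 : ‖(2:ℝ)‖ = 2 := by rw [Real.norm_eq_abs]; norm_num
          rw [e1, e2, norm_smul, norm_smul, hn2] at hd
          have hsolid : ‖F.absCoeff (u + v) - F.absCoeff (u - v)‖ ≤
              ‖(2:ℝ) • F.restrict S u + (2:ℝ) • F.restrict Sᶜ v‖ := by
            apply solid_mono adm
            intro l
            have hmin : ‖adm.emb (F.absCoeff (u + v) - F.absCoeff (u - v)) l‖ =
                min (2 * ‖F.Φ l v‖) (2 * ‖F.Φ l u‖) := by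
              rw [absCoeff_sub_apply]
              have e3 : F.Φ l (u + v) - F.Φ l (u - v) = 2 * F.Φ l v := by
                rw [map_add, map_sub]; ring
              have e4 : F.Φ l (u + v) + F.Φ l (u - v) = 2 * F.Φ l u := by
                rw [map_add, map_sub]; ring
              simp only [Real.norm_eq_abs]
              rw [min_abs_eq, e3, e4, abs_mul, abs_mul]
              norm_num
            have hrhs : adm.emb ((2:ℝ) • F.restrict S u + (2:ℝ) • F.restrict Sᶜ v) l
                = 2 * (S.indicator (fun l => F.Φ l u) l)
                  + 2 * (Sᶜ.indicator (fun l => F.Φ l v) l) := by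
              rw [map_add, map_smul, map_smul, Pi.add_apply, Pi.smul_apply, Pi.smul_apply,
                F.restrict_spec, F.restrict_spec, smul_eq_mul, smul_eq_mul]
            rw [hmin, hrhs]
            by_cases hl : l ∈ S
            · have hl' : l ∉ Sᶜ := fun h => h hl
              rw [Set.indicator_of_mem hl, Set.indicator_of_notMem hl', mul_zero, add_zero]
              simp only [Real.norm_eq_abs, abs_mul, abs_two]
              exact min_le_right _ _
            · have hl' : l ∈ Sᶜ := hl
              rw [Set.indicator_of_notMem hl, Set.indicator_of_mem hl', mul_zero, zero_add]
              simp only [Real.norm_eq_abs, abs_mul, abs_two]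
              exact min_le_left _ _
          have htri : ‖(2:ℝ) • F.restrict S u + (2:ℝ) • F.restrict Sᶜ v‖ ≤
              2 * ‖F.restrict S u‖ + 2 * ‖F.restrict Sᶜ v‖ := by
            calc ‖(2:ℝ) • F.restrict S u + (2:ℝ) • F.restrict Sᶜ v‖
                ≤ ‖(2:ℝ) • F.restrict S u‖ + ‖(2:ℝ) • F.restrict Sᶜ v‖ := norm_add_le _ _
              _ = 2 * ‖F.restrict S u‖ + 2 * ‖F.restrict Sᶜ v‖ := by
                  rw [norm_smul, norm_smul, hn2]
          have hminc : min (2 * ‖v‖) (2 * ‖u‖) = 2 * min ‖u‖ ‖v‖ := by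
            rw [min_comm]
            rcases le_total ‖u‖ ‖v‖ with h|h
            · rw [min_eq_left h, min_eq_left (by linarith)]
            · rw [min_eq_right h, min_eq_right (by linarith)]
          rw [hminc] at hd
          have hcomb := le_trans hd (le_trans hsolid htri)
          linarith
        by_contra hcon
        push_neg at hcon
        obtain ⟨hS1, hS2⟩ := max_lt_iff.mp hcon
        have hex : ∀ T : Set Λ, lb T < a/2 → ∃ u : B, u ≠ 0 ∧ ‖F.restrict T u‖ < a/2 * ‖u‖ := by
          intro T hT
          by_contra hc
          push_neg at hc
          have hadm : a/2 ∈ lbSet F T := by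
            refine ⟨by linarith [ha.1], fun x => ?_⟩
            rcases eq_or_ne x 0 with rfl|hx
            · rw [restrict_zero]; simp
            · exact hc x hx
          have h := le_csSup (lb_bdd T) hadm
          rw [hlb] at hT
          linarith
        obtain ⟨u, hu0, hu⟩ := hex S hS1
        obtain ⟨v, hv0, hv⟩ := hex Sᶜ hS2
        have hupos : 0 < ‖u‖ := norm_pos_iff.mpr hu0
        have hvpos : 0 < ‖v‖ := norm_pos_iff.mpr hv0
        have hun : ‖(‖u‖⁻¹ • u : B)‖ = 1 := by
          rw [norm_smul, Real.norm_eq_abs, abs_inv, abs_norm, inv_mul_cancel₀ hupos.ne']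
        have hvn : ‖(‖v‖⁻¹ • v : B)‖ = 1 := by
          rw [norm_smul, Real.norm_eq_abs, abs_inv, abs_norm, inv_mul_cancel₀ hvpos.ne']
        have hru : ‖F.restrict S (‖u‖⁻¹ • u)‖ < a/2 := by
          rw [restrict_smul, norm_smul, Real.norm_eq_abs, abs_inv, abs_norm]
          calc ‖u‖⁻¹ * ‖F.restrict S u‖ < ‖u‖⁻¹ * (a/2 * ‖u‖) :=
                mul_lt_mul_of_pos_left hu (inv_pos.mpr hupos)
            _ = a/2 := by field_simp
        have hrv : ‖F.restrict Sᶜ (‖v‖⁻¹ • v)‖ < a/2 := by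
          rw [restrict_smul, norm_smul, Real.norm_eq_abs, abs_inv, abs_norm]
          calc ‖v‖⁻¹ * ‖F.restrict Sᶜ v‖ < ‖v‖⁻¹ * (a/2 * ‖v‖) :=
                mul_lt_mul_of_pos_left hv (inv_pos.mpr hvpos)
            _ = a/2 := by field_simp
        have hkey := key (‖u‖⁻¹ • u) (‖v‖⁻¹ • v)
        rw [hun, hvn, min_self, mul_one] at hkey
        linarith
      have h := le_csSup σ_bdd hmem
      rw [hσ]
      linarith
end

section
/- Let B be a finite-dimensional Banach space over ℝ or ℂ, and Φ a Banach frame for B such that the phaseless map A_Φ : B/~ → 𝔅 is injective. Then A_Φ^{-1} is uniformly continuous on its range; equivalently, there exists α > 0 with α · min_{|τ|=1}‖x - τy‖_B ≤ ‖A_Φ(x) - A_Φ(y)‖_𝔅 for all x, y ∈ B, so the condition number is finite. -/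
open scoped BigOperators

open Filter Topology

section Aux
variable {K : Type} [RCLike K]
open RCLike

lemma aux_normsq_add (a b : K) :
    ‖a + b‖ ^ 2 = ‖a‖ ^ 2 + 2 * re ((starRingEnd K) a * b) + ‖b‖ ^ 2 := by
  rw [norm_sq_eq_def, norm_sq_eq_def (z := a), norm_sq_eq_def (z := b)]
  simp only [map_add, mul_re, conj_re, conj_im]
  ring

lemma aux_norm_eq (a b : K) (h : re ((starRingEnd K) a * b) = 0) : ‖a + b‖ = ‖a - b‖ := by
  have h1 := aux_normsq_add a b
  have h2 := aux_normsq_add a (-b)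
  simp only [mul_neg, map_neg, norm_neg, ← sub_eq_add_neg] at h2
  rw [h] at h1 h2
  have : ‖a + b‖ ^ 2 = ‖a - b‖ ^ 2 := by rw [h1, h2]; ring
  nlinarith [norm_nonneg (a + b), norm_nonneg (a - b)]

lemma aux_expand (z h : K) (hz : 2 * ‖h‖ ≤ ‖z‖) :
    |‖z + h‖ - (‖z‖ + re ((starRingEnd K) z * h) / ‖z‖)| ≤ ‖h‖ ^ 2 / ‖z‖ := by
  by_cases hz0 : z = 0
  · have hh : h = 0 := by
      have h2 : ‖h‖ = 0 := by
        rw [hz0] at hz; simp at hz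
        linarith [norm_nonneg h]
      simpa [norm_eq_zero] using h2
    simp [hz0, hh]
  have hzpos : 0 < ‖z‖ := norm_pos_iff.mpr hz0
  set R := re ((starRingEnd K) z * h) with hR
  have hRle : |R| ≤ ‖z‖ * ‖h‖ := by
    calc |R| ≤ ‖(starRingEnd K) z * h‖ := abs_re_le_norm _
      _ = ‖z‖ * ‖h‖ := by rw [norm_mul, RCLike.norm_conj]
  set A := ‖z + h‖ with hA
  set Bv := ‖z‖ + R / ‖z‖ with hBv
  have hA2 : A ^ 2 = ‖z‖ ^ 2 + 2 * R + ‖h‖ ^ 2 := aux_normsq_add z h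
  have hB2 : Bv ^ 2 = ‖z‖ ^ 2 + 2 * R + R ^ 2 / ‖z‖ ^ 2 := by
    rw [hBv]; field_simp; ring
  have hRsq : R ^ 2 ≤ ‖h‖ ^ 2 * ‖z‖ ^ 2 := by
    nlinarith [mul_self_le_mul_self (abs_nonneg R) hRle, sq_abs R]
  have hd1 : 0 ≤ A ^ 2 - Bv ^ 2 := by
    rw [hA2, hB2]
    have : R ^ 2 / ‖z‖ ^ 2 ≤ ‖h‖ ^ 2 := by
      rw [div_le_iff₀ (by positivity)]; linarith
    linarith
  have hd2 : A ^ 2 - Bv ^ 2 ≤ ‖h‖ ^ 2 := by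
    rw [hA2, hB2]
    have : 0 ≤ R ^ 2 / ‖z‖ ^ 2 := by positivity
    linarith
  have hAge : ‖z‖ / 2 ≤ A := by
    have h1 : ‖z‖ - ‖h‖ ≤ ‖z + h‖ := by
      calc ‖z‖ - ‖h‖ ≤ ‖z - (-h)‖ := by simpa using norm_sub_norm_le z (-h)
        _ = ‖z + h‖ := by ring_nf
    have : ‖h‖ ≤ ‖z‖ / 2 := by linarith
    rw [hA]; linarith
  have hBge : ‖z‖ / 2 ≤ Bv := by
    have h1 : -‖h‖ ≤ R / ‖z‖ := by
      rw [le_div_iff₀ hzpos]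
      nlinarith [neg_abs_le R]
    rw [hBv]; linarith
  have hsum : ‖z‖ ≤ A + Bv := by
    calc ‖z‖ = ‖z‖ / 2 + ‖z‖ / 2 := by ring
      _ ≤ A + Bv := add_le_add hAge hBge
  have hABnn : 0 ≤ A + Bv := by linarith
  have key : |A - Bv| * (A + Bv) ≤ ‖h‖ ^ 2 := by
    have e1 : |A - Bv| * (A + Bv) = |A ^ 2 - Bv ^ 2| := by
      rw [← abs_of_nonneg hABnn, ← abs_mul]
      congr 1; ring
    rw [e1, abs_of_nonneg hd1]; exact hd2
  rw [le_div_iff₀ hzpos]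
  calc |A - Bv| * ‖z‖ ≤ |A - Bv| * (A + Bv) :=
        mul_le_mul_of_nonneg_left hsum (abs_nonneg _)
    _ ≤ ‖h‖ ^ 2 := key

lemma aux_pd_nonneg {B : Type} [NormedAddCommGroup B] [NormedSpace K B] (x y : B) :
    0 ≤ phaseDist K x y := by
  refine le_csInf ⟨‖x - (1:K) • y‖, 1, by simp, rfl⟩ ?_
  rintro r ⟨τ, hτ, rfl⟩
  exact norm_nonneg _

lemma aux_pd_le {B : Type} [NormedAddCommGroup B] [NormedSpace K B] (x y : B) (τ : K)
    (hτ : ‖τ‖ = 1) : phaseDist K x y ≤ ‖x - τ • y‖ := by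
  apply csInf_le
  · exact ⟨0, by rintro r ⟨σ, hσ, rfl⟩; exact norm_nonneg _⟩
  · exact ⟨τ, hτ, rfl⟩

lemma aux_pd_exists {B : Type} [NormedAddCommGroup B] [NormedSpace K B] (x y : B) :
    ∃ τ : K, ‖τ‖ = 1 ∧ phaseDist K x y = ‖x - τ • y‖ := by
  have hcomp : IsCompact (Metric.sphere (0 : K) 1) := isCompact_sphere 0 1
  have hne : (Metric.sphere (0 : K) 1).Nonempty := ⟨1, by simp⟩
  have hcont : ContinuousOn (fun τ : K => ‖x - τ • y‖) (Metric.sphere (0 : K) 1) :=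
    (Continuous.norm (by continuity)).continuousOn
  obtain ⟨τ, hτmem, hτmin⟩ := hcomp.exists_isMinOn hne hcont
  have hτ : ‖τ‖ = 1 := by simpa using hτmem
  refine ⟨τ, hτ, le_antisymm (aux_pd_le x y τ hτ) ?_⟩
  refine le_csInf ⟨‖x - (1:K) • y‖, 1, by simp, rfl⟩ ?_
  rintro r ⟨σ, hσ, rfl⟩
  exact hτmin (by simpa using hσ)

end Aux

section Aux2
variable {K Λ B E : Type} [RCLike K] [TopologicalSpace Λ]
    [NormedAddCommGroup B] [NormedSpace K B]
    [NormedAddCommGroup E] [NormedSpace K E]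

lemma aux_eval (adm : AdmissibleEmbedding K Λ E) (l : Λ) :
    ∃ κ : ℝ, 0 < κ ∧ ∀ z : E, ‖adm.emb z l‖ ≤ κ * ‖z‖ := by
  obtain ⟨e, he⟩ := adm.indicator_mem {l} isCompact_singleton
  have he_l : adm.emb e l = 1 := by rw [he]; simp
  have hene : e ≠ 0 := by
    intro h0
    rw [h0, map_zero] at he_l
    simp at he_l
  have hpos : (0:ℝ) < ‖e‖ := norm_pos_iff.mpr hene
  refine ⟨‖e‖⁻¹, inv_pos.mpr hpos, fun z => ?_⟩
  have hdom : ∀ l', ‖Set.indicator {l} (fun _ => adm.emb z l) l'‖ ≤ ‖adm.emb z l'‖ := by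
    intro l'
    by_cases hmem : l' ∈ ({l} : Set Λ)
    · rcases hmem with rfl
      rw [Set.indicator_of_mem (by exact rfl)]
    · rw [Set.indicator_of_notMem hmem]
      simp
  obtain ⟨w', hw', hwn⟩ := adm.solid_exists _ z hdom
  have hw'eq : w' = adm.emb z l • e := by
    apply adm.inj
    rw [hw', map_smul]
    funext l'
    by_cases hmem : l' ∈ ({l} : Set Λ)
    · rcases hmem with rfl
      simp [he, Set.indicator_of_mem, smul_eq_mul]
    · simp [he, Set.indicator_of_notMem hmem]
  rw [hw'eq, norm_smul] at hwn
  rw [inv_mul_eq_div, le_div_iff₀ hpos]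
  exact hwn

lemma aux_absCoeff_smul (adm : AdmissibleEmbedding K Λ E) (F : BanachFramePR K Λ B E adm)
    (τ : K) (x : B) :
    F.absCoeff (τ • x) = ((‖τ‖ : ℝ) : K) • F.absCoeff x := by
  apply adm.inj
  rw [map_smul]
  funext l
  rw [Pi.smul_apply, F.absCoeff_spec, F.absCoeff_spec, smul_eq_mul]
  rw [map_smul, smul_eq_mul, norm_mul, RCLike.ofReal_mul]

lemma aux_bad (adm : AdmissibleEmbedding K Λ E) (F : BanachFramePR K Λ B E adm)
    (hcon : ∀ α : ℝ, 0 < α → ∃ x y : B,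
      ‖F.absCoeff x - F.absCoeff y‖ < α * phaseDist K x y) (n : ℕ) :
    ∃ p : B × B,
      max ‖p.1‖ ‖p.2‖ = 1 ∧
      (∀ σ : K, ‖σ‖ = 1 → ‖p.1 - p.2‖ ≤ ‖p.1 - σ • p.2‖) ∧
      (n : ℝ) * ‖F.absCoeff p.1 - F.absCoeff p.2‖ < ‖p.1 - p.2‖ := by
  obtain ⟨x, y, hxy⟩ := hcon ((n : ℝ) + 1)⁻¹ (by positivity)
  have hf0 : 0 ≤ ‖F.absCoeff x - F.absCoeff y‖ := norm_nonneg _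
  have hd0 : 0 < phaseDist K x y := by
    rcases (aux_pd_nonneg (K := K) x y).lt_or_eq with h | h
    · exact h
    · exfalso; rw [← h, mul_zero] at hxy; linarith
  obtain ⟨τ, hτ, hτd⟩ := aux_pd_exists (K := K) x y
  set y' := τ • y with hy'
  have habs' : F.absCoeff y' = F.absCoeff y := by
    rw [hy', aux_absCoeff_smul adm F, hτ, RCLike.ofReal_one, one_smul]
  have hmin : ∀ σ : K, ‖σ‖ = 1 → ‖x - y'‖ ≤ ‖x - σ • y'‖ := by
    intro σ hσ
    have h1 : σ • y' = (σ * τ) • y := by rw [hy', smul_smul]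
    rw [h1, ← hτd]
    exact aux_pd_le x y (σ * τ) (by rw [norm_mul, hσ, hτ, mul_one])
  have hdxy' : phaseDist K x y = ‖x - y'‖ := hτd
  have hmaxpos : 0 < max ‖x‖ ‖y'‖ := by
    by_contra hmp
    push_neg at hmp
    have hx0 : ‖x‖ = 0 := le_antisymm (le_trans (le_max_left _ _) hmp) (norm_nonneg _)
    have hy0 : ‖y'‖ = 0 := le_antisymm (le_trans (le_max_right _ _) hmp) (norm_nonneg _)
    have h2 : ‖x - y'‖ = 0 := by
      have h3 := norm_sub_le x y'
      have h4 := norm_nonneg (x - y')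
      linarith
    rw [hdxy', h2] at hd0
    exact lt_irrefl _ hd0
  set t : ℝ := (max ‖x‖ ‖y'‖)⁻¹ with ht
  have htpos : 0 < t := inv_pos.mpr hmaxpos
  have hnorm_t : ∀ v : B, ‖((t : ℝ) : K) • v‖ = t * ‖v‖ := by
    intro v; rw [norm_smul, RCLike.norm_ofReal, abs_of_pos htpos]
  refine ⟨(((t : ℝ) : K) • x, ((t : ℝ) : K) • y'), ?_, ?_, ?_⟩
  · show max ‖((t : ℝ) : K) • x‖ ‖((t : ℝ) : K) • y'‖ = 1
    rw [hnorm_t, hnorm_t, ← mul_max_of_nonneg _ _ (le_of_lt htpos)]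
    exact inv_mul_cancel₀ (ne_of_gt hmaxpos)
  · intro σ hσ
    show ‖((t : ℝ) : K) • x - ((t : ℝ) : K) • y'‖ ≤ ‖((t : ℝ) : K) • x - σ • (((t : ℝ) : K) • y')‖
    rw [smul_comm σ (((t : ℝ) : K)) y', ← smul_sub, ← smul_sub, hnorm_t, hnorm_t]
    exact mul_le_mul_of_nonneg_left (hmin σ hσ) (le_of_lt htpos)
  · show (n : ℝ) * ‖F.absCoeff (((t : ℝ) : K) • x) - F.absCoeff (((t : ℝ) : K) • y')‖ <
      ‖((t : ℝ) : K) • x - ((t : ℝ) : K) • y'‖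
    have habsx : F.absCoeff (((t : ℝ) : K) • x) = ((t : ℝ) : K) • F.absCoeff x := by
      rw [aux_absCoeff_smul adm F, RCLike.norm_ofReal, abs_of_pos htpos]
    have habsy : F.absCoeff (((t : ℝ) : K) • y') = ((t : ℝ) : K) • F.absCoeff y := by
      rw [aux_absCoeff_smul adm F, RCLike.norm_ofReal, abs_of_pos htpos, habs']
    have hnf : (n : ℝ) * ‖F.absCoeff x - F.absCoeff y‖ < ‖x - y'‖ := by
      rw [← hdxy']
      have h3 : ((n : ℝ) + 1) * ‖F.absCoeff x - F.absCoeff y‖ < phaseDist K x y := by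
        have h4 : 0 < (n : ℝ) + 1 := by positivity
        calc ((n : ℝ) + 1) * ‖F.absCoeff x - F.absCoeff y‖
            < ((n : ℝ) + 1) * (((n : ℝ) + 1)⁻¹ * phaseDist K x y) :=
              mul_lt_mul_of_pos_left hxy h4
          _ = phaseDist K x y := by field_simp
      nlinarith
    rw [habsx, habsy, ← smul_sub, ← smul_sub, hnorm_t, norm_smul, RCLike.norm_ofReal, abs_of_pos htpos]
    calc (n : ℝ) * (t * ‖F.absCoeff x - F.absCoeff y‖)
        = t * ((n : ℝ) * ‖F.absCoeff x - F.absCoeff y‖) := by ring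
      _ < t * ‖x - y'‖ := mul_lt_mul_of_pos_left hnf htpos

end Aux2

lemma aux_endgame {K B : Type} [RCLike K] [NormedAddCommGroup B] [NormedSpace K B]
    (X Y W : B) (c : K)
    (hW : ‖W‖ = 1) (hcre : RCLike.re c = 0) (hcnorm : ‖c‖ = 1)
    (hd0 : 0 < ‖X - Y‖) (hdlt : ‖X - Y‖ < 1/4) (hεlt : ‖X - c • W‖ < 1/4)
    (hYX : Y = X - ((‖X - Y‖ : ℝ) : K) • W)
    (hmin : ∀ σ : K, ‖σ‖ = 1 → ‖X - Y‖ ≤ ‖X - σ • Y‖) : False := by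
  set d : ℝ := ‖X - Y‖ with hdd
  set ε : ℝ := ‖X - c • W‖ with hεε
  have hε0 : 0 ≤ ε := norm_nonneg _
  set v : K := c - ((d : ℝ) : K) with hv
  have hrecd : RCLike.re ((starRingEnd K) c * ((d : ℝ) : K)) = 0 := by
    rw [mul_comm, RCLike.re_ofReal_mul, RCLike.conj_re, hcre, mul_zero]
  have hvsq : ‖v‖ ^ 2 = 1 + d ^ 2 := by
    have h38 := aux_normsq_add c (-((d : ℝ) : K))
    rw [← sub_eq_add_neg, mul_neg, map_neg, hrecd, neg_zero, hcnorm, norm_neg,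
      RCLike.norm_ofReal] at h38
    calc ‖v‖ ^ 2 = 1 ^ 2 + 2 * 0 + |d| ^ 2 := by rw [hv]; exact h38
      _ = 1 + d ^ 2 := by rw [sq_abs]; ring
  have hv1 : 1 ≤ ‖v‖ := by nlinarith [norm_nonneg v]
  have hvK : ((‖v‖ : ℝ) : K) ≠ 0 := by
    rw [Ne, RCLike.ofReal_eq_zero]
    intro h0
    rw [h0] at hv1
    linarith
  set σ : K := (c * (starRingEnd K) v) / ((‖v‖ : ℝ) : K) with hσ
  have hσ1 : ‖σ‖ = 1 := by
    rw [hσ, norm_div, norm_mul, hcnorm, RCLike.norm_conj, RCLike.norm_ofReal,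
      abs_of_nonneg (by linarith : (0:ℝ) ≤ ‖v‖), one_mul,
      div_self (by linarith : ‖v‖ ≠ 0)]
  have hconjv : (starRingEnd K) v * v = ((‖v‖ : ℝ) : K) * ((‖v‖ : ℝ) : K) := by
    rw [RCLike.conj_mul]
    push_cast
    ring
  have hσv : σ * v = c * ((‖v‖ : ℝ) : K) := by
    rw [hσ, div_mul_eq_mul_div, mul_assoc, hconjv, mul_div_assoc, mul_div_assoc,
      div_self hvK, mul_one]
  have hkey1 : ((1:K) - σ) * c + ((d : ℝ) : K) * σ = c * (1 - ((‖v‖ : ℝ) : K)) := by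
    have hexp2 : ((1:K) - σ) * c + ((d : ℝ) : K) * σ = c - σ * v := by
      rw [hv]; ring
    rw [hexp2, hσv]; ring
  have hvd2 : ‖v‖ - 1 ≤ d ^ 2 := by nlinarith [sq_nonneg (‖v‖ - 1), hvsq]
  have hkey1n : ‖((1:K) - σ) * c + ((d : ℝ) : K) * σ‖ ≤ d ^ 2 := by
    rw [hkey1, norm_mul, hcnorm, one_mul,
      show (1:K) - ((‖v‖ : ℝ) : K) = (((1 - ‖v‖ : ℝ)) : K) by push_cast; ring,
      RCLike.norm_ofReal, abs_of_nonpos (by linarith)]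
    linarith
  have hccv : c * (starRingEnd K) v = 1 - ((d : ℝ) : K) * c := by
    rw [hv, map_sub, RCLike.conj_ofReal, mul_sub, RCLike.mul_conj, hcnorm]
    push_cast
    ring
  have hkey2 : ‖(1:K) - σ‖ ≤ 2 * d := by
    have h40 : (1:K) - σ = (((‖v‖ : ℝ) : K) - 1 + ((d : ℝ) : K) * c) / ((‖v‖ : ℝ) : K) := by
      rw [hσ, hccv]
      field_simp
      ring
    rw [h40, norm_div, RCLike.norm_ofReal, abs_of_nonneg (by linarith : (0:ℝ) ≤ ‖v‖)]
    have h41 : ‖((‖v‖ : ℝ) : K) - 1 + ((d : ℝ) : K) * c‖ ≤ (‖v‖ - 1) + d := by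
      calc ‖((‖v‖ : ℝ) : K) - 1 + ((d : ℝ) : K) * c‖
          ≤ ‖((‖v‖ : ℝ) : K) - 1‖ + ‖((d : ℝ) : K) * c‖ := norm_add_le _ _
        _ = (‖v‖ - 1) + d := by
          rw [norm_mul, hcnorm, mul_one, RCLike.norm_ofReal, abs_of_pos hd0,
            show ((‖v‖ : ℝ) : K) - 1 = ((‖v‖ - 1 : ℝ) : K) by push_cast; ring,
            RCLike.norm_ofReal, abs_of_nonneg (by linarith)]
    calc ‖((‖v‖ : ℝ) : K) - 1 + ((d : ℝ) : K) * c‖ / ‖v‖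
        ≤ ‖((‖v‖ : ℝ) : K) - 1 + ((d : ℝ) : K) * c‖ := div_le_self (norm_nonneg _) hv1
      _ ≤ (‖v‖ - 1) + d := h41
      _ ≤ 2 * d := by nlinarith
  have hdecomp : X - σ • Y =
      ((1:K) - σ) • (X - c • W) + (((1:K) - σ) * c + ((d : ℝ) : K) * σ) • W := by
    rw [hYX]
    module
  have hfinal : ‖X - σ • Y‖ ≤ 2 * d * ε + d ^ 2 := by
    rw [hdecomp]
    calc ‖((1:K) - σ) • (X - c • W) + (((1:K) - σ) * c + ((d : ℝ) : K) * σ) • W‖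
        ≤ ‖((1:K) - σ) • (X - c • W)‖
          + ‖(((1:K) - σ) * c + ((d : ℝ) : K) * σ) • W‖ := norm_add_le _ _
      _ ≤ 2 * d * ε + d ^ 2 := by
        rw [norm_smul, norm_smul, hW, mul_one]
        have h42 : ‖(1:K) - σ‖ * ε ≤ 2 * d * ε :=
          mul_le_mul_of_nonneg_right hkey2 hε0
        linarith [hkey1n]
  have hcontra : d ≤ ‖X - σ • Y‖ := hmin σ hσ1
  nlinarith [hcontra, hfinal, mul_lt_mul_of_pos_left hεlt hd0,
    mul_lt_mul_of_pos_left hdlt hd0, hd0]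


/-- In finite dimensions, injective phase retrieval with a Banach frame is uniformly
stable: there is a positive lower Lipschitz constant for the phaseless map. -/
theorem stmt_9 {K Λ B E : Type} [RCLike K] [TopologicalSpace Λ]
    [NormedAddCommGroup B] [NormedSpace K B] [FiniteDimensional K B]
    [NormedAddCommGroup E] [NormedSpace K E] [CompleteSpace E]
    (adm : AdmissibleEmbedding K Λ E) (F : BanachFramePR K Λ B E adm)
    (hinj : ∀ x y : B, (∀ l, ‖F.Φ l x‖ = ‖F.Φ l y‖) → ∃ τ : K, ‖τ‖ = 1 ∧ x = τ • y) :
    ∃ α : ℝ, 0 < α ∧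
      ∀ x y : B, α * phaseDist K x y ≤ ‖F.absCoeff x - F.absCoeff y‖ := by
  have hproper : ProperSpace B := FiniteDimensional.proper_rclike K B
  by_contra hcon
  push_neg at hcon
  choose p hp1 hp2 hp3 using fun n => aux_bad adm F hcon n
  set x : ℕ → B := fun n => (p n).1 with hxdef
  set y : ℕ → B := fun n => (p n).2 with hydef
  have hdpos : ∀ n, 0 < ‖x n - y n‖ := fun n =>
    lt_of_le_of_lt (by positivity) (hp3 n)
  set w : ℕ → B := fun n => ((‖x n - y n‖⁻¹ : ℝ) : K) • (x n - y n) with hwdef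
  have hwnorm : ∀ n, ‖w n‖ = 1 := by
    intro n
    show ‖((‖x n - y n‖⁻¹ : ℝ) : K) • (x n - y n)‖ = 1
    rw [norm_smul, RCLike.norm_ofReal, abs_of_pos (inv_pos.mpr (hdpos n)),
      inv_mul_cancel₀ (ne_of_gt (hdpos n))]
  have hxw : ∀ n, x n = y n + ((‖x n - y n‖ : ℝ) : K) • w n := by
    intro n
    show x n = y n + ((‖x n - y n‖ : ℝ) : K) • (((‖x n - y n‖⁻¹ : ℝ) : K) • (x n - y n))
    rw [smul_smul, ← RCLike.ofReal_mul, mul_inv_cancel₀ (ne_of_gt (hdpos n)),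
      RCLike.ofReal_one, one_smul, add_sub_cancel]
  have hxle : ∀ n, ‖x n‖ ≤ 1 := fun n => le_trans (le_max_left _ _) (le_of_eq (hp1 n))
  have hyle : ∀ n, ‖y n‖ ≤ 1 := fun n => le_trans (le_max_right _ _) (le_of_eq (hp1 n))
  set S : Set (B × B × B) :=
    Metric.closedBall 0 1 ×ˢ Metric.closedBall 0 1 ×ˢ Metric.sphere 0 1 with hSdef
  have hScomp : IsCompact S := (isCompact_closedBall _ _).prod
      ((isCompact_closedBall _ _).prod (isCompact_sphere _ _))
  have hmemS : ∀ n, (x n, y n, w n) ∈ S := by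
    intro n
    refine ⟨?_, ?_, ?_⟩
    · rw [Metric.mem_closedBall, dist_zero_right]; exact hxle n
    · rw [Metric.mem_closedBall, dist_zero_right]; exact hyle n
    · rw [mem_sphere_zero_iff_norm]; exact hwnorm n
  obtain ⟨a, haS, φ, hφ, hconv⟩ := hScomp.tendsto_subseq hmemS
  have hx : Tendsto (fun n => x (φ n)) atTop (𝓝 a.1) :=
    (continuous_fst.tendsto a).comp hconv
  have hy : Tendsto (fun n => y (φ n)) atTop (𝓝 a.2.1) :=
    ((continuous_fst.comp continuous_snd).tendsto a).comp hconv
  have hw : Tendsto (fun n => w (φ n)) atTop (𝓝 a.2.2) :=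
    ((continuous_snd.comp continuous_snd).tendsto a).comp hconv
  set xs := a.1 with hxs
  set ys := a.2.1 with hys
  set ws := a.2.2 with hws
  have hws1 : ‖ws‖ = 1 := by
    have := haS.2.2
    rwa [mem_sphere_zero_iff_norm] at this
  set fseq : ℕ → ℝ := fun n => ‖F.absCoeff (x (φ n)) - F.absCoeff (y (φ n))‖ with hfseqdef
  set dseq : ℕ → ℝ := fun n => ‖x (φ n) - y (φ n)‖ with hdseqdef
  have hdseq_pos : ∀ n, 0 < dseq n := fun n => hdpos _
  have hdle2 : ∀ n, dseq n ≤ 2 := by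
    intro n
    calc dseq n ≤ ‖x (φ n)‖ + ‖y (φ n)‖ := norm_sub_le _ _
      _ ≤ 2 := by linarith [hxle (φ n), hyle (φ n)]
  have hfseq0 : ∀ n, 0 ≤ fseq n := fun n => norm_nonneg _
  have hratio : Tendsto (fun n => fseq n / dseq n) atTop (𝓝 0) := by
    apply squeeze_zero' (Eventually.of_forall fun n => div_nonneg (hfseq0 n) (hdseq_pos n).le)
      ?_ tendsto_one_div_atTop_nhds_zero_nat
    filter_upwards [eventually_ge_atTop 1] with n hn
    have h5 := hp3 (φ n)
    have hφn : (n : ℝ) ≤ (φ n : ℝ) := Nat.cast_le.mpr hφ.le_apply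
    have hn1 : (1 : ℝ) ≤ (n : ℝ) := by exact_mod_cast hn
    rw [div_le_div_iff₀ (hdseq_pos n) (by linarith)]
    have : fseq n * (n : ℝ) ≤ fseq n * (φ n : ℝ) :=
      mul_le_mul_of_nonneg_left hφn (hfseq0 n)
    calc fseq n * (n : ℝ) ≤ (φ n : ℝ) * fseq n := by linarith
      _ ≤ dseq n := (h5).le
      _ = 1 * dseq n := (one_mul _).symm
  have hfseq : Tendsto fseq atTop (𝓝 0) := by
    have h6 : Tendsto (fun n => fseq n / dseq n * 2) atTop (𝓝 0) := by
      have := hratio.mul_const (2 : ℝ)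
      simpa using this
    apply squeeze_zero' (Eventually.of_forall hfseq0) ?_ h6
    filter_upwards with n
    calc fseq n = fseq n / dseq n * dseq n :=
        (div_mul_cancel₀ (fseq n) (ne_of_gt (hdseq_pos n))).symm
      _ ≤ fseq n / dseq n * 2 :=
        mul_le_mul_of_nonneg_left (hdle2 n) (div_nonneg (hfseq0 n) (hdseq_pos n).le)
  choose κ hκpos hκ using fun l => aux_eval adm l
  have hptw : ∀ (l : Λ) (u v : B),
      |‖F.Φ l u‖ - ‖F.Φ l v‖| ≤ κ l * ‖F.absCoeff u - F.absCoeff v‖ := by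
    intro l u v
    have h6 := hκ l (F.absCoeff u - F.absCoeff v)
    rw [map_sub, Pi.sub_apply, F.absCoeff_spec, F.absCoeff_spec, ← RCLike.ofReal_sub,
      RCLike.norm_ofReal] at h6
    exact h6
  rcases eq_or_ne xs ys with heq | hne
  · -- xs = ys : blow-up analysis
    have hmax1 : max ‖xs‖ ‖ys‖ = 1 := by
      have h12 : Tendsto (fun n => max ‖x (φ n)‖ ‖y (φ n)‖) atTop (𝓝 (max ‖xs‖ ‖ys‖)) :=
        hx.norm.max hy.norm
      have h13 : Tendsto (fun n => max ‖x (φ n)‖ ‖y (φ n)‖) atTop (𝓝 1) := by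
        have : (fun n => max ‖x (φ n)‖ ‖y (φ n)‖) = fun _ => (1 : ℝ) := by
          funext n; exact hp1 (φ n)
        rw [this]; exact tendsto_const_nhds
      exact tendsto_nhds_unique h12 h13
    have hxs1 : ‖xs‖ = 1 := by
      rw [heq] at hmax1 ⊢
      rwa [max_self] at hmax1
    have hdlim : Tendsto dseq atTop (𝓝 0) := by
      have h14 := (hx.sub hy).norm
      rw [show ‖xs - ys‖ = 0 by rw [heq, sub_self, norm_zero]] at h14
      exact h14
    have hkey : ∀ l, RCLike.re ((starRingEnd K) (F.Φ l xs) * F.Φ l ws) = 0 := by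
      intro l
      by_cases ha0 : F.Φ l xs = 0
      · rw [ha0]; simp
      · have hanorm : 0 < ‖F.Φ l xs‖ := norm_pos_iff.mpr ha0
        set aseq : ℕ → K := fun n => F.Φ l (y (φ n)) with haseq
        set bseq : ℕ → K := fun n => F.Φ l (w (φ n)) with hbseq
        have halim : Tendsto aseq atTop (𝓝 (F.Φ l xs)) := by
          have h15 : Tendsto aseq atTop (𝓝 (F.Φ l ys)) :=
            ((F.Φ l).continuous.tendsto ys).comp hy
          rwa [← heq] at h15
        have hblim : Tendsto bseq atTop (𝓝 (F.Φ l ws)) :=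
          ((F.Φ l).continuous.tendsto ws).comp hw
        have hxdecomp : ∀ n, F.Φ l (x (φ n)) = aseq n + ((dseq n : ℝ) : K) * bseq n := by
          intro n
          conv_lhs => rw [hxw (φ n)]
          rw [map_add, map_smul, smul_eq_mul]
        have hprodlim : Tendsto (fun n => dseq n * ‖bseq n‖) atTop (𝓝 0) := by
          have := hdlim.mul hblim.norm
          simpa using this
        have hev : ∀ᶠ n in atTop, 2 * (dseq n * ‖bseq n‖) < ‖aseq n‖ := by
          have h16 : Tendsto (fun n => ‖aseq n‖ - 2 * (dseq n * ‖bseq n‖)) atTop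
              (𝓝 (‖F.Φ l xs‖ - 2 * 0)) := halim.norm.sub (hprodlim.const_mul 2)
          have h17 : (0:ℝ) < ‖F.Φ l xs‖ - 2 * 0 := by simpa using hanorm
          filter_upwards [h16.eventually_const_lt h17] with n hn
          linarith
        have hbound : ∀ᶠ n in atTop, |RCLike.re ((starRingEnd K) (aseq n) * bseq n)| ≤
            (‖aseq n‖ * κ l) * (fseq n / dseq n) + dseq n * ‖bseq n‖ ^ 2 := by
          filter_upwards [hev] with n hn
          have hd := hdseq_pos n
          set hh : K := ((dseq n : ℝ) : K) * bseq n with hhh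
          have hhn : ‖hh‖ = dseq n * ‖bseq n‖ := by
            rw [hhh, norm_mul, RCLike.norm_ofReal, abs_of_pos hd]
          have hapos : 0 < ‖aseq n‖ := by
            have := mul_nonneg hd.le (norm_nonneg (bseq n))
            linarith
          have hexp := aux_expand (aseq n) hh (by rw [hhn]; linarith)
          have hnd : |‖aseq n + hh‖ - ‖aseq n‖| ≤ κ l * fseq n := by
            have h18 := hptw l (x (φ n)) (y (φ n))
            rw [hxdecomp n] at h18
            exact h18
          have hre2 : RCLike.re ((starRingEnd K) (aseq n) * hh) =
              dseq n * RCLike.re ((starRingEnd K) (aseq n) * bseq n) := by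
            rw [hhh, show (starRingEnd K) (aseq n) * (((dseq n : ℝ) : K) * bseq n) =
              ((dseq n : ℝ) : K) * ((starRingEnd K) (aseq n) * bseq n) by ring,
              RCLike.re_ofReal_mul]
          have h20 : |RCLike.re ((starRingEnd K) (aseq n) * hh)| / ‖aseq n‖ ≤
              ‖hh‖ ^ 2 / ‖aseq n‖ + κ l * fseq n := by
            have htri : |RCLike.re ((starRingEnd K) (aseq n) * hh) / ‖aseq n‖| ≤
                |‖aseq n‖ + RCLike.re ((starRingEnd K) (aseq n) * hh) / ‖aseq n‖ - ‖aseq n + hh‖|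
                + |‖aseq n + hh‖ - ‖aseq n‖| := by
              calc |RCLike.re ((starRingEnd K) (aseq n) * hh) / ‖aseq n‖|
                  = |(‖aseq n‖ + RCLike.re ((starRingEnd K) (aseq n) * hh) / ‖aseq n‖
                      - ‖aseq n + hh‖) + (‖aseq n + hh‖ - ‖aseq n‖)| := by congr 1; ring
                _ ≤ _ := abs_add_le _ _
            rw [abs_div, abs_of_pos hapos] at htri
            rw [abs_sub_comm] at htri
            exact le_trans htri (add_le_add hexp hnd)
          have h21 : |RCLike.re ((starRingEnd K) (aseq n) * hh)| ≤
              ‖hh‖ ^ 2 + (‖aseq n‖ * κ l) * fseq n := by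
            rw [div_le_iff₀ hapos] at h20
            calc |RCLike.re ((starRingEnd K) (aseq n) * hh)|
                ≤ (‖hh‖ ^ 2 / ‖aseq n‖ + κ l * fseq n) * ‖aseq n‖ := h20
              _ = ‖hh‖ ^ 2 + (‖aseq n‖ * κ l) * fseq n := by
                field_simp
          rw [hre2, abs_mul, abs_of_pos hd, hhn] at h21
          -- dseq n * |re (conj a b)| ≤ (dseq n * ‖b‖)^2 + (‖a‖ κ) f
          rw [show |RCLike.re ((starRingEnd K) (aseq n) * bseq n)| =
              dseq n * |RCLike.re ((starRingEnd K) (aseq n) * bseq n)| / dseq n by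
            field_simp]
          rw [div_le_iff₀ hd]
          calc dseq n * |RCLike.re ((starRingEnd K) (aseq n) * bseq n)|
              ≤ (dseq n * ‖bseq n‖) ^ 2 + (‖aseq n‖ * κ l) * fseq n := h21
            _ = ((‖aseq n‖ * κ l) * (fseq n / dseq n) + dseq n * ‖bseq n‖ ^ 2) * dseq n := by
              field_simp; ring
        have hlhs : Tendsto (fun n => |RCLike.re ((starRingEnd K) (aseq n) * bseq n)|) atTop
            (𝓝 |RCLike.re ((starRingEnd K) (F.Φ l xs) * F.Φ l ws)|) := by
          apply Tendsto.abs
          apply (RCLike.continuous_re.tendsto _).comp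
          exact ((RCLike.continuous_conj.tendsto _).comp halim).mul hblim
        have hglim : Tendsto (fun n => (‖aseq n‖ * κ l) * (fseq n / dseq n)
            + dseq n * ‖bseq n‖ ^ 2) atTop
            (𝓝 ((‖F.Φ l xs‖ * κ l) * 0 + 0 * ‖F.Φ l ws‖ ^ 2)) :=
          ((halim.norm.mul_const (κ l)).mul hratio).add
            (hdlim.mul ((hblim.norm.pow 2)))
        have h22 : |RCLike.re ((starRingEnd K) (F.Φ l xs) * F.Φ l ws)| ≤
            (‖F.Φ l xs‖ * κ l) * 0 + 0 * ‖F.Φ l ws‖ ^ 2 :=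
          le_of_tendsto_of_tendsto hlhs hglim hbound
        have h23 : |RCLike.re ((starRingEnd K) (F.Φ l xs) * F.Φ l ws)| ≤ 0 := by
          simpa using h22
        have h24 : |RCLike.re ((starRingEnd K) (F.Φ l xs) * F.Φ l ws)| = 0 :=
          le_antisymm h23 (abs_nonneg _)
        exact abs_eq_zero.mp h24
    have hpm : ∀ l, ‖F.Φ l (xs + ws)‖ = ‖F.Φ l (xs - ws)‖ := by
      intro l
      rw [map_add, map_sub]
      exact aux_norm_eq _ _ (hkey l)
    obtain ⟨τ, hτ1, hτeq⟩ := hinj _ _ hpm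
    by_cases hτone : τ = 1
    · rw [hτone, one_smul] at hτeq
      have h30 : ws = -ws := by
        have h := hτeq
        rw [sub_eq_add_neg] at h
        exact add_left_cancel h
      have h31 : (2 : K) • ws = 0 := by
        rw [two_smul, add_eq_zero_iff_eq_neg]
        exact h30
      have h32 : ws = (0 : B) := by
        rcases smul_eq_zero.mp h31 with h | h
        · exfalso
          have h2K : (2 : K) ≠ 0 := two_ne_zero
          exact h2K h
        · exact h
      rw [h32, norm_zero] at hws1
      norm_num at hws1
    · have h1τ : (1 : K) - τ ≠ 0 := sub_ne_zero.mpr (fun h => hτone h.symm)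
      set c : K := (-(1 + τ)) / (1 - τ) with hc
      have hxc : xs = c • ws := by
        have h31 : ((1:K) - τ) • xs = (-(1 + τ)) • ws := by
          have h32 := hτeq
          rw [smul_sub] at h32
          rw [sub_smul, one_smul, neg_smul, add_smul, one_smul, neg_add]
          calc xs - τ • xs = (xs + ws) - ws - τ • xs := by abel
            _ = (τ • xs - τ • ws) - ws - τ • xs := by rw [h32]
            _ = -ws + -(τ • ws) := by abel
        have h33 := congrArg (fun u => ((1:K) - τ)⁻¹ • u) h31
        simp only [smul_smul, inv_mul_cancel₀ h1τ, one_smul] at h33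
        rw [h33, hc, div_eq_inv_mul]
      have hτne : τ ≠ 0 := by
        intro h0
        rw [h0, norm_zero] at hτ1
        norm_num at hτ1
      have hτc : (starRingEnd K) τ = τ⁻¹ := (RCLike.inv_eq_conj hτ1).symm
      have hτ1ne : τ - 1 ≠ 0 := sub_ne_zero.mpr hτone
      have hinv1 : τ⁻¹ ≠ 1 := by
        intro h
        apply hτone
        rw [← inv_inv τ, h, inv_one]
      have hA : (1 : K) - τ⁻¹ ≠ 0 := sub_ne_zero.mpr (fun h => hinv1 h.symm)
      have hcre : RCLike.re c = 0 := by
        have hconj : (starRingEnd K) c = -c := by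
          rw [hc, map_div₀, map_neg, map_add, map_one, map_sub, map_one, hτc]
          rw [div_eq_iff hA, neg_div, neg_mul, neg_eq_iff_eq_neg, neg_neg]
          field_simp
          ring
        have h35 : RCLike.re ((starRingEnd K) c) = RCLike.re c := RCLike.conj_re c
        rw [hconj, map_neg] at h35
        linarith [h35]
      have hcnorm : ‖c‖ = 1 := by
        have h36 := congrArg norm hxc
        rw [norm_smul, hws1, mul_one, hxs1] at h36
        exact h36.symm
      have hεlim : Tendsto (fun n => ‖x (φ n) - c • w (φ n)‖) atTop (𝓝 0) := by
        have h37 := (hx.sub (hw.const_smul c)).norm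
        rw [show ‖xs - c • ws‖ = 0 by rw [hxc, sub_self, norm_zero]] at h37
        exact h37
      have hev2 : ∀ᶠ n in atTop, ‖x (φ n) - c • w (φ n)‖ < 1/4 :=
        hεlim.eventually_lt_const (by norm_num)
      have hev3 : ∀ᶠ n in atTop, dseq n < 1/4 := hdlim.eventually_lt_const (by norm_num)
      obtain ⟨n, hn2, hn3⟩ := (hev2.and hev3).exists
      have hdseq_eq : dseq n = ‖x (φ n) - y (φ n)‖ := rfl
      rw [hdseq_eq] at hn3
      have hd0 : 0 < ‖x (φ n) - y (φ n)‖ := hdpos _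
      have hyx : y (φ n) = x (φ n) - ((‖x (φ n) - y (φ n)‖ : ℝ) : K) • w (φ n) :=
        eq_sub_of_add_eq (hxw (φ n)).symm
      have hminn : ∀ σ : K, ‖σ‖ = 1 → ‖x (φ n) - y (φ n)‖ ≤ ‖x (φ n) - σ • y (φ n)‖ :=
        fun σ hσ => hp2 (φ n) σ hσ
      exact aux_endgame (x (φ n)) (y (φ n)) (w (φ n)) c (hwnorm (φ n)) hcre hcnorm
        hd0 hn3 hn2 hyx hminn
  · -- xs ≠ ys
    have hl_eq : ∀ l, ‖F.Φ l xs‖ = ‖F.Φ l ys‖ := by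
      intro l
      have h7 : Tendsto (fun n => |‖F.Φ l (x (φ n))‖ - ‖F.Φ l (y (φ n))‖|) atTop
          (𝓝 |‖F.Φ l xs‖ - ‖F.Φ l ys‖|) :=
        ((((F.Φ l).continuous.tendsto xs).comp hx).norm.sub
          (((F.Φ l).continuous.tendsto ys).comp hy).norm).abs
      have h8 : Tendsto (fun n => κ l * fseq n) atTop (𝓝 (κ l * 0)) := hfseq.const_mul _
      have h9 : |‖F.Φ l xs‖ - ‖F.Φ l ys‖| ≤ κ l * 0 :=
        le_of_tendsto_of_tendsto' h7 h8 (fun n => hptw l _ _)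
      have h10 : |‖F.Φ l xs‖ - ‖F.Φ l ys‖| = 0 :=
        le_antisymm (by rwa [mul_zero] at h9) (abs_nonneg _)
      exact sub_eq_zero.mp (abs_eq_zero.mp h10)
    obtain ⟨τ, hτ1, hτ2⟩ := hinj xs ys hl_eq
    have hminlim : ‖xs - ys‖ ≤ ‖xs - τ • ys‖ := by
      have h10 : Tendsto (fun n => ‖x (φ n) - y (φ n)‖) atTop (𝓝 ‖xs - ys‖) := (hx.sub hy).norm
      have h11 : Tendsto (fun n => ‖x (φ n) - τ • y (φ n)‖) atTop (𝓝 ‖xs - τ • ys‖) :=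
        (hx.sub (hy.const_smul τ)).norm
      exact le_of_tendsto_of_tendsto' h10 h11 (fun n => hp2 (φ n) τ hτ1)
    have h12 : ‖xs - τ • ys‖ = 0 := by rw [hτ2, sub_self, norm_zero]
    rw [h12] at hminlim
    have h13 : ‖xs - ys‖ = 0 := le_antisymm hminlim (norm_nonneg _)
    exact hne (sub_eq_zero.mp (norm_eq_zero.mp h13))
end

section
/- Let B be an infinite-dimensional Banach space, Λ a compact topological space, and Φ = (φ_λ)_{λ∈Λ} ⊆ B' a family of functionals with λ ↦ φ_λ continuous (in operator norm). Then Φ cannot satisfy a lower frame inequality with respect to any admissible Banach space 𝔅: there is no constant A > 0 with A‖x‖_B ≤ ‖(φ_λ(x))_λ‖_𝔅 for all x ∈ B. -/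
open scoped BigOperators

/-- Over a compact index set, no continuous family of functionals on an
infinite-dimensional Banach space can satisfy a lower frame inequality with respect to an
admissible Banach space. -/
theorem stmt_10 {K Λ B E : Type} [RCLike K] [TopologicalSpace Λ] [CompactSpace Λ]
    [NormedAddCommGroup B] [NormedSpace K B] [CompleteSpace B]
    (hinf : ¬ FiniteDimensional K B)
    [NormedAddCommGroup E] [NormedSpace K E] [CompleteSpace E]
    (adm : AdmissibleEmbedding K Λ E)
    (Φ : Λ → (B →L[K] K)) (hcont : Continuous Φ) :
    ¬ ∃ (coeff : B → E) (A : ℝ), 0 < A ∧ (∀ x l, adm.emb (coeff x) l = Φ l x) ∧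
      ∀ x : B, A * ‖x‖ ≤ ‖coeff x‖ := by
  rintro ⟨coeff, A, hA, hspec, hlower⟩
  obtain ⟨e, he⟩ := adm.indicator_mem Set.univ isCompact_univ
  set ν : ℝ := A / (2 * (‖e‖ + 1)) with hνdef
  have hνpos : 0 < ν := by positivity
  -- an open cover by sets on which Φ varies by less than ν
  have hU : ∀ μ : Λ, {l | dist (Φ l) (Φ μ) < ν} ∈ nhds μ := by
    intro μ
    have hc : Continuous fun l => dist (Φ l) (Φ μ) := hcont.dist continuous_const
    have hopen : IsOpen {l | dist (Φ l) (Φ μ) < ν} := isOpen_lt hc continuous_const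
    exact hopen.mem_nhds (by simpa using hνpos)
  obtain ⟨t, -, hcov⟩ := isCompact_univ.elim_nhds_subcover
    (fun μ => {l | dist (Φ l) (Φ μ) < ν}) (fun μ _ => hU μ)
  -- a nonzero vector in the intersection of the kernels
  set T : B →ₗ[K] (↥t → K) := LinearMap.pi (fun i => (Φ i).toLinearMap) with hT
  have hker : LinearMap.ker T ≠ ⊥ := by
    intro h
    exact hinf (FiniteDimensional.of_injective T (LinearMap.ker_eq_bot.mp h))
  obtain ⟨x, hxker, hx0⟩ := (Submodule.ne_bot_iff _).mp hker
  have hxn : ‖x‖ ≠ 0 := norm_ne_zero_iff.mpr hx0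
  set y : B := ((‖x‖ : K))⁻¹ • x with hy
  have hyn : ‖y‖ = 1 := by
    rw [hy, norm_smul, norm_inv, RCLike.norm_ofReal, abs_of_nonneg (norm_nonneg x)]
    field_simp
  have hxzero : ∀ μ ∈ t, Φ μ x = 0 := by
    intro μ hμ
    have := LinearMap.mem_ker.mp hxker
    have := congrFun this ⟨μ, hμ⟩
    simpa [hT] using this
  have hyzero : ∀ μ ∈ t, Φ μ y = 0 := by
    intro μ hμ
    simp [hy, hxzero μ hμ]
  -- pointwise bound on the coefficients of y
  have hbound : ∀ l : Λ, ‖Φ l y‖ ≤ ν := by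
    intro l
    have hl : l ∈ ⋃ μ ∈ t, {l | dist (Φ l) (Φ μ) < ν} := hcov (Set.mem_univ l)
    simp only [Set.mem_iUnion, Set.mem_setOf_eq] at hl
    obtain ⟨μ, hμt, hdist⟩ := hl
    have h1 : Φ l y = (Φ l - Φ μ) y := by simp [hyzero μ hμt]
    calc ‖Φ l y‖ = ‖(Φ l - Φ μ) y‖ := by rw [h1]
      _ ≤ ‖Φ l - Φ μ‖ * ‖y‖ := (Φ l - Φ μ).le_opNorm y
      _ = dist (Φ l) (Φ μ) := by rw [hyn, dist_eq_norm]; ring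
      _ ≤ ν := le_of_lt hdist
  -- use solidity against ν • e
  set z : E := ((ν : K)) • e with hz
  have hz_emb : ∀ l, adm.emb z l = (ν : K) := by
    intro l
    simp [hz, map_smul, he, Set.indicator_of_mem (Set.mem_univ l)]
  have hwle : ∀ l, ‖adm.emb (coeff y) l‖ ≤ ‖adm.emb z l‖ := by
    intro l
    rw [hspec y l, hz_emb l, RCLike.norm_ofReal, abs_of_nonneg hνpos.le]
    exact hbound l
  obtain ⟨w', hw', hwn⟩ := adm.solid_exists (adm.emb (coeff y)) z hwle
  have hcw : w' = coeff y := adm.inj hw'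
  have hzn : ‖z‖ = ν * ‖e‖ := by
    rw [hz, norm_smul, RCLike.norm_ofReal, abs_of_nonneg hνpos.le]
  have hfinal : A ≤ ν * ‖e‖ := by
    have h1 := hlower y
    rw [hyn, mul_one] at h1
    calc A ≤ ‖coeff y‖ := h1
      _ = ‖w'‖ := by rw [hcw]
      _ ≤ ‖z‖ := hwn
      _ = ν * ‖e‖ := hzn
  have hen : (0:ℝ) ≤ ‖e‖ := norm_nonneg e
  rw [hνdef] at hfinal
  have h2 : (0:ℝ) < 2 * (‖e‖ + 1) := by positivity
  rw [div_mul_eq_mul_div, le_div_iff₀ h2] at hfinal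
  nlinarith
end

section
/- Let 𝔅 be an admissible Banach space over a σ-compact space Λ and let K ⊆ 𝔅 be strongly equicontinuous. Then K is relatively compact in 𝔅 if and only if (RC1) K is bounded, and (RC2) for every ε > 0 there exists a compact set Λ_ε ⊆ Λ with sup_{w∈K} ‖w·χ_{Λ\Λ_ε}‖_𝔅 ≤ ε. -/
open scoped BigOperators

section Aux
variable {K Λ E : Type} [RCLike K] [TopologicalSpace Λ]
    [NormedAddCommGroup E] [NormedSpace K E]

lemma AdmissibleEmbedding.exists_restrict (adm : AdmissibleEmbedding K Λ E)
    (S : Set Λ) (w : E) : ∃ r : E, adm.emb r = S.indicator (adm.emb w) ∧ ‖r‖ ≤ ‖w‖ := by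
  apply adm.solid_exists
  intro l
  by_cases h : l ∈ S
  · simp [Set.indicator_of_mem h]
  · simp [Set.indicator_of_notMem h]

lemma AdmissibleEmbedding.eval_bound (adm : AdmissibleEmbedding K Λ E) (l : Λ) :
    ∃ e : E, adm.emb e = ({l} : Set Λ).indicator (fun _ => (1:K)) ∧ 0 < ‖e‖ ∧
      ∀ w : E, ‖adm.emb w l‖ * ‖e‖ ≤ ‖w‖ := by
  obtain ⟨e, he⟩ := adm.indicator_mem {l} isCompact_singleton
  refine ⟨e, he, ?_, ?_⟩
  · rw [norm_pos_iff]
    intro h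
    have h2 : adm.emb e l = 0 := by rw [h]; simp
    rw [he] at h2
    simp [Set.indicator_of_mem, Set.mem_singleton_iff] at h2
  · intro w
    obtain ⟨r, hr, hrle⟩ := adm.exists_restrict {l} w
    have hre : r = (adm.emb w l) • e := by
      apply adm.inj
      ext μ
      rw [hr, map_smul]
      by_cases hμ : μ ∈ ({l} : Set Λ)
      · rcases hμ with rfl
        simp [Set.indicator_of_mem, he]
      · simp [Set.indicator_of_notMem hμ, he, Pi.smul_apply]
    rw [hre, norm_smul] at hrle
    exact hrle

lemma AdmissibleEmbedding.decompose (adm : AdmissibleEmbedding K Λ E)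
    (S : Set Λ) (w r T : E) (hr : adm.emb r = S.indicator (adm.emb w))
    (hT : adm.emb T = Sᶜ.indicator (adm.emb w)) : w = r + T := by
  apply adm.inj
  ext l
  rw [map_add, Pi.add_apply, hr, hT]
  by_cases hl : l ∈ S
  · rw [Set.indicator_of_mem hl, Set.indicator_of_notMem (by simpa using hl), add_zero]
  · rw [Set.indicator_of_notMem hl, Set.indicator_of_mem (by simpa using hl), zero_add]

end Aux

/-- Characterization of relative compactness in an admissible Banach space: a strongly
equicontinuous family `𝒦` is relatively compact iff it is bounded and its tails outside
large compact subsets of `Λ` are uniformly small in norm. -/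
theorem stmt_13 {K Λ E : Type} [RCLike K] [TopologicalSpace Λ] [SigmaCompactSpace Λ]
    [NormedAddCommGroup E] [NormedSpace K E] [CompleteSpace E]
    (adm : AdmissibleEmbedding K Λ E) (𝒦 : Set E)
    (hequi : ∀ ε : ℝ, 0 < ε → ∀ l : Λ, ∃ U ∈ nhds l, ∀ μ ∈ U, ∀ w ∈ 𝒦,
      ‖adm.emb w μ - adm.emb w l‖ ≤ ε) :
    IsCompact (closure 𝒦) ↔
      (Bornology.IsBounded 𝒦 ∧
        ∀ ε : ℝ, 0 < ε → ∃ Λε : Set Λ, IsCompact Λε ∧ ∀ w ∈ 𝒦, ∀ wr : E,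
          adm.emb wr = Λεᶜ.indicator (adm.emb w) → ‖wr‖ ≤ ε) := by
  classical
  constructor
  · -- forward
    intro hcomp
    refine ⟨hcomp.isBounded.subset subset_closure, ?_⟩
    intro ε hε
    have htb : TotallyBounded 𝒦 := hcomp.totallyBounded.subset subset_closure
    obtain ⟨t, htfin, htcov⟩ := Metric.totallyBounded_iff.mp htb (ε/2) (by linarith)
    have hz : ∀ y : E, ∃ p : E × Set Λ, IsCompact p.2 ∧ (∀ l, l ∉ p.2 → adm.emb p.1 l = 0) ∧
        ‖y - p.1‖ < ε/2 := by
      intro y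
      have hy := adm.dense_compact y
      rw [Metric.mem_closure_iff] at hy
      obtain ⟨b, hb, hdb⟩ := hy (ε/2) (by linarith)
      obtain ⟨Λ', hΛ', hb0⟩ := hb
      exact ⟨(b, Λ'), hΛ', hb0, by rwa [dist_eq_norm] at hdb⟩
    choose p hp1 hp2 hp3 using hz
    refine ⟨⋃ y ∈ t, (p y).2, htfin.isCompact_biUnion (fun y _ => hp1 y), ?_⟩
    intro w hw wr hwr
    obtain ⟨y, hyt, hwy⟩ := Set.mem_iUnion₂.mp (htcov hw)
    have key : ∀ l, ‖adm.emb wr l‖ ≤ ‖adm.emb (w - (p y).1) l‖ := by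
      intro l
      rw [hwr]
      by_cases hl : l ∈ (⋃ y ∈ t, (p y).2)
      · rw [Set.indicator_of_notMem (by simpa using hl)]
        simp
      · rw [Set.indicator_of_mem (by simpa using hl)]
        have h0 : adm.emb (p y).1 l = 0 := hp2 y l (fun h => hl (Set.mem_biUnion hyt h))
        rw [map_sub, Pi.sub_apply, h0, sub_zero]
    obtain ⟨w', hw', hle⟩ := adm.solid_exists (adm.emb wr) (w - (p y).1) key
    have hwrw' : wr = w' := adm.inj hw'.symm
    rw [hwrw']
    refine hle.trans ?_
    have h1 : ‖w - (p y).1‖ ≤ ε := by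
      calc ‖w - (p y).1‖ ≤ ‖w - y‖ + ‖y - (p y).1‖ := by
            have := dist_triangle w y (p y).1
            simpa [dist_eq_norm] using this
        _ ≤ ε/2 + ε/2 := by
            refine add_le_add ?_ (hp3 y).le
            rw [Metric.mem_ball, dist_eq_norm] at hwy
            exact hwy.le
        _ = ε := by ring
    exact h1
  · -- backward
    rintro ⟨hbdd, htail⟩
    have htb : TotallyBounded 𝒦 := by
      rw [Metric.totallyBounded_iff]
      intro ε hε
      obtain ⟨M, hM⟩ := hbdd.exists_norm_le
      obtain ⟨Λ', hΛ'c, hΛ'⟩ := htail (ε/4) (by linarith)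
      obtain ⟨e, he⟩ := adm.indicator_mem Λ' hΛ'c
      set Ce := ‖e‖ with hCe
      have hCe0 : (0:ℝ) ≤ Ce := norm_nonneg e
      set δ := ε / (16 * (Ce + 1)) with hδdef
      have hδ : 0 < δ := by positivity
      choose U hU hUosc using hequi δ hδ
      obtain ⟨t, _, htcov⟩ := hΛ'c.elim_nhds_subcover U (fun l _ => hU l)
      set G : E → ({x // x ∈ t} → K) := fun w i => adm.emb w i.1 with hG
      have hMev : ∀ i : {x // x ∈ t}, ∃ c : ℝ, 0 ≤ c ∧ ∀ w ∈ 𝒦, ‖adm.emb w i.1‖ ≤ c := by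
        intro i
        obtain ⟨el, hel, hel0, helB⟩ := adm.eval_bound (K := K) i.1
        refine ⟨max M 0 / ‖el‖, by positivity, ?_⟩
        intro w hw
        rw [le_div_iff₀ hel0]
        exact (helB w).trans ((hM w hw).trans (le_max_left _ _))
      choose c hc0 hcB using hMev
      have htbG : TotallyBounded (G '' 𝒦) := by
        refine (isCompact_closedBall (0 : {x // x ∈ t} → K) (∑ i, c i)).totallyBounded.subset ?_
        rintro _ ⟨w, hw, rfl⟩
        rw [Metric.mem_closedBall, dist_zero_right,
          pi_norm_le_iff_of_nonneg (Finset.sum_nonneg fun i _ => hc0 i)]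
        intro i
        exact (hcB i w hw).trans (Finset.single_le_sum (fun j _ => hc0 j) (Finset.mem_univ i))
      obtain ⟨N, hNfin, hNcov⟩ := Metric.totallyBounded_iff.mp htbG δ hδ
      set f : ({x // x ∈ t} → K) → E :=
        fun y => if h : ∃ w ∈ 𝒦, dist (G w) y < δ then h.choose else 0 with hf
      refine ⟨f '' N, hNfin.image f, ?_⟩
      intro w hw
      obtain ⟨y, hyN, hGwy⟩ := Set.mem_iUnion₂.mp (hNcov ⟨w, hw, rfl⟩)
      rw [Set.mem_iUnion₂]
      refine ⟨f y, Set.mem_image_of_mem f hyN, ?_⟩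
      have hex : ∃ w' ∈ 𝒦, dist (G w') y < δ := ⟨w, hw, hGwy⟩
      have hfy : f y = hex.choose := by rw [hf]; simp only [dif_pos hex]
      obtain ⟨hwtK, hwtd⟩ := hex.choose_spec
      set wt := hex.choose with hwt
      have hcoord : ∀ i : {x // x ∈ t}, ‖adm.emb w i.1 - adm.emb wt i.1‖ ≤ 2*δ := by
        intro i
        have h1 : ‖G w - G wt‖ ≤ 2*δ := by
          have h2 := dist_triangle (G w) y (G wt)
          rw [dist_eq_norm] at h2
          rw [Metric.mem_ball] at hGwy
          rw [dist_comm] at hwtd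
          linarith
        calc ‖adm.emb w i.1 - adm.emb wt i.1‖ = ‖(G w - G wt) i‖ := by
              simp [hG, Pi.sub_apply]
          _ ≤ ‖G w - G wt‖ := norm_le_pi_norm _ i
          _ ≤ 2*δ := h1
      have hpt : ∀ l ∈ Λ', ‖adm.emb w l - adm.emb wt l‖ ≤ 4*δ := by
        intro l hl
        obtain ⟨i, hit, hlU⟩ := Set.mem_iUnion₂.mp (htcov hl)
        have h1 := hUosc i l hlU w hw
        have h2 := hUosc i l hlU wt hwtK
        have h3 := hcoord ⟨i, hit⟩
        have heq : adm.emb w l - adm.emb wt l =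
            (adm.emb w l - adm.emb w i) + (adm.emb w i - adm.emb wt i)
              + (adm.emb wt i - adm.emb wt l) := by ring
        rw [heq]
        calc ‖(adm.emb w l - adm.emb w i) + (adm.emb w i - adm.emb wt i)
              + (adm.emb wt i - adm.emb wt l)‖
            ≤ ‖adm.emb w l - adm.emb w i‖ + ‖adm.emb w i - adm.emb wt i‖
              + ‖adm.emb wt i - adm.emb wt l‖ := norm_add₃_le
          _ ≤ δ + 2*δ + δ := by
              refine add_le_add (add_le_add h1 h3) ?_
              rw [norm_sub_rev]
              exact h2
          _ = 4*δ := by ring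
      obtain ⟨rw_, hrw, _⟩ := adm.exists_restrict Λ' w
      obtain ⟨rwt, hrwt, _⟩ := adm.exists_restrict Λ' wt
      obtain ⟨Tw, hTw, _⟩ := adm.exists_restrict Λ'ᶜ w
      obtain ⟨Twt, hTwt, _⟩ := adm.exists_restrict Λ'ᶜ wt
      have hTwle : ‖Tw‖ ≤ ε/4 := hΛ' w hw Tw hTw
      have hTwtle : ‖Twt‖ ≤ ε/4 := hΛ' wt hwtK Twt hTwt
      have hd1 : w = rw_ + Tw := adm.decompose Λ' w rw_ Tw hrw hTw
      have hd2 : wt = rwt + Twt := adm.decompose Λ' wt rwt Twt hrwt hTwt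
      have hrdiff : ‖rw_ - rwt‖ ≤ 4*δ*Ce := by
        have hnorm4δ : ‖((4*δ:ℝ):K)‖ = 4*δ := by
          rw [RCLike.norm_ofReal, abs_of_nonneg (by positivity)]
        have hside : ∀ l, ‖adm.emb (rw_ - rwt) l‖ ≤ ‖adm.emb ((((4*δ:ℝ):K)) • e) l‖ := by
          intro l
          rw [map_sub, Pi.sub_apply, hrw, hrwt, map_smul, Pi.smul_apply, he]
          by_cases hl : l ∈ Λ'
          · rw [Set.indicator_of_mem hl, Set.indicator_of_mem hl, Set.indicator_of_mem hl,
              smul_eq_mul, mul_one, hnorm4δ]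
            exact hpt l hl
          · simp [Set.indicator_of_notMem hl]
        obtain ⟨w', hw', hle'⟩ := adm.solid_exists (adm.emb (rw_ - rwt)) (((4*δ:ℝ):K) • e) hside
        have hww' : rw_ - rwt = w' := adm.inj hw'.symm
        rw [hww']
        refine hle'.trans ?_
        rw [norm_smul, hnorm4δ]
      rw [Metric.mem_ball, dist_eq_norm, hfy]
      have hsplit : w - wt = (rw_ - rwt) + (Tw - Twt) := by
        rw [hd1, hd2]; abel
      have hfinal : ‖w - wt‖ ≤ 4*δ*Ce + (ε/4 + ε/4) := by
        rw [hsplit]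
        calc ‖(rw_ - rwt) + (Tw - Twt)‖ ≤ ‖rw_ - rwt‖ + ‖Tw - Twt‖ := norm_add_le _ _
          _ ≤ 4*δ*Ce + (‖Tw‖ + ‖Twt‖) := add_le_add hrdiff (norm_sub_le _ _)
          _ ≤ 4*δ*Ce + (ε/4 + ε/4) := by linarith
      have hδCe : 4*δ*Ce ≤ ε/4 := by
        have hne : (16 * (Ce + 1)) ≠ 0 := by positivity
        have h1 : δ * (16 * (Ce + 1)) = ε := by
          rw [hδdef]; field_simp
        nlinarith [hδ.le, hCe0]
      calc ‖w - wt‖ ≤ 4*δ*Ce + (ε/4 + ε/4) := hfinal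
        _ ≤ ε/4 + (ε/4 + ε/4) := by linarith
        _ < ε := by linarith
    exact TotallyBounded.isCompact_of_isClosed htb.closure isClosed_closure
end

section
/- Let 𝔅 be an admissible Banach space over a σ-compact space Λ and K ⊆ 𝔅 a strongly equicontinuous family. Then K is relatively compact in 𝔅 if and only if the family of absolute values |K| = {|w| : w ∈ K} is relatively compact in 𝔅. -/
open scoped BigOperators

/-! Taking pointwise absolute values is `1`-Lipschitz, so total boundedness passes from `𝒦`
to `|𝒦|`. Conversely, a finite net of `|𝒦|` and the density of compactly supported elements
give a compact `S` outside of which every `w ∈ 𝒦` has norm `≤ ε / 4` (restrictions of `w` and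
`|w|` have the same norm). Cover `S` by finitely many neighbourhoods `U_m` on which `𝒦` varies
by less than `δ`; if `w, w' ∈ 𝒦` are `δ`-close at the finitely many centres `m`, they are
`3δ`-close on all of `S`, and solidity against the indicator of `S` bounds the norm of their
difference there. Since point evaluations are continuous, the vectors of values at the centres
form a bounded, hence totally bounded, subset of a finite-dimensional space. -/

open Set Metric

theorem isCompact_closure_iff_totallyBounded {α : Type*} [UniformSpace α] [CompleteSpace α]
    {s : Set α} : IsCompact (closure s) ↔ TotallyBounded s :=
  ⟨fun h => totallyBounded_closure.1 h.totallyBounded,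
    fun h => h.closure.isCompact_of_isClosed isClosed_closure⟩

theorem Metric.exists_finite_cover_ball_of_totallyBounded_image {α β : Type*}
    [PseudoMetricSpace α] [PseudoMetricSpace β] {s : Set α} {f : α → β}
    (hf : TotallyBounded (f '' s)) {δ ε : ℝ} (hδ : 0 < δ)
    (h : ∀ x ∈ s, ∀ y ∈ s, dist (f x) (f y) < δ → dist x y < ε) :
    ∃ t : Set α, t.Finite ∧ s ⊆ ⋃ y ∈ t, ball y ε := by
  obtain ⟨u, hus, hufin, hucov⟩ := finite_approx_of_totallyBounded hf δ hδ
  obtain ⟨t, hts, htfin, rfl⟩ := hufin.exists_subset_finite_image_eq hus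
  refine ⟨t, htfin, fun x hx => ?_⟩
  obtain ⟨_, ⟨y, hyt, rfl⟩, hxy⟩ := mem_iUnion₂.1 (hucov (mem_image_of_mem f hx))
  exact mem_iUnion₂.2 ⟨y, hyt, h x hx y (hts hyt) hxy⟩

namespace AdmissibleEmbedding

variable {K Λ E : Type} [RCLike K] [TopologicalSpace Λ] [NormedAddCommGroup E]
  [NormedSpace K E] (adm : AdmissibleEmbedding K Λ E)

theorem norm_le_of_forall_norm_le_s14 {u v : E} (h : ∀ l, ‖adm.emb u l‖ ≤ ‖adm.emb v l‖) :
    ‖u‖ ≤ ‖v‖ := by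
  obtain ⟨w, hw, hwv⟩ := adm.solid_exists (adm.emb u) v h
  rwa [adm.inj hw] at hwv

theorem exists_norm_emb_apply_le (l : Λ) : ∃ c : ℝ, ∀ w : E, ‖adm.emb w l‖ ≤ c * ‖w‖ := by
  obtain ⟨e, he⟩ := adm.indicator_mem {l} isCompact_singleton
  have hel : adm.emb e l = 1 := by simp [he]
  have he0 : 0 < ‖e‖ := norm_pos_iff.2 fun h => by simp [h] at hel
  refine ⟨‖e‖⁻¹, fun w => ?_⟩
  have key : ‖adm.emb w l • e‖ ≤ ‖w‖ := by
    refine adm.norm_le_of_forall_norm_le_s14 fun m => ?_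
    rcases eq_or_ne m l with rfl | hm
    · simp [hel]
    · simp [he, hm]
  rw [norm_smul] at key
  rwa [inv_mul_eq_div, le_div_iff₀ he0]

noncomputable def evalCLM (l : Λ) : E →L[K] K :=
  (LinearMap.proj l ∘ₗ adm.emb).mkContinuousOfExistsBound (adm.exists_norm_emb_apply_le l)

noncomputable def restrict (S : Set Λ) (z : E) : E :=
  (adm.solid_exists (S.indicator (adm.emb z)) z fun _ => norm_indicator_le_norm_self _ _).choose

theorem emb_restrict (S : Set Λ) (z : E) :
    adm.emb (adm.restrict S z) = S.indicator (adm.emb z) :=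
  (adm.solid_exists _ z fun _ => norm_indicator_le_norm_self _ _).choose_spec.1

theorem restrict_sub (S : Set Λ) (z z' : E) :
    adm.restrict S (z - z') = adm.restrict S z - adm.restrict S z' :=
  adm.inj <| by simp only [map_sub, emb_restrict, indicator_sub']

theorem restrict_add_restrict_compl (S : Set Λ) (z : E) :
    adm.restrict S z + adm.restrict Sᶜ z = z :=
  adm.inj <| by rw [map_add, emb_restrict, emb_restrict, indicator_self_add_compl]

theorem norm_restrict_le (S : Set Λ) (z : E) : ‖adm.restrict S z‖ ≤ ‖z‖ :=
  adm.norm_le_of_forall_norm_le_s14 fun l => by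
    rw [emb_restrict]; exact norm_indicator_le_norm_self _ _

theorem norm_restrict_mono {S T : Set Λ} (h : S ⊆ T) (z : E) :
    ‖adm.restrict S z‖ ≤ ‖adm.restrict T z‖ :=
  adm.norm_le_of_forall_norm_le_s14 fun l => by
    simp only [emb_restrict]; exact norm_indicator_le_of_subset h _ _

theorem norm_restrict_le_mul_of_forall_norm_le {S : Set Λ} {e : E}
    (he : adm.emb e = S.indicator fun _ => 1) {z : E} {r : ℝ} (hr : 0 ≤ r)
    (hz : ∀ l ∈ S, ‖adm.emb z l‖ ≤ r) : ‖adm.restrict S z‖ ≤ r * ‖e‖ := by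
  have key : ‖adm.restrict S z‖ ≤ ‖(r : K) • e‖ := adm.norm_le_of_forall_norm_le_s14 fun l => by
    by_cases hl : l ∈ S
    · simpa [emb_restrict, he, hl, abs_of_nonneg hr] using hz l hl
    · simp [emb_restrict, he, hl]
  rwa [norm_smul, RCLike.norm_ofReal, abs_of_nonneg hr] at key

theorem exists_isCompact_norm_restrict_compl_lt (z : E) {ε : ℝ} (hε : 0 < ε) :
    ∃ S, IsCompact S ∧ ‖adm.restrict Sᶜ z‖ < ε := by
  obtain ⟨c, ⟨S, hS, hcS⟩, hzc⟩ := adm.dense_compact.exists_dist_lt z hε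
  have hc : adm.restrict Sᶜ c = 0 :=
    adm.inj <| funext fun l => by
      by_cases hl : l ∈ S
      · simp [emb_restrict, hl]
      · simp [emb_restrict, hl, hcS l hl]
  refine ⟨S, hS, ?_⟩
  calc ‖adm.restrict Sᶜ z‖ = ‖adm.restrict Sᶜ (z - c)‖ := by rw [restrict_sub, hc, sub_zero]
    _ ≤ ‖z - c‖ := adm.norm_restrict_le _ _
    _ < ε := by rwa [← dist_eq_norm]

theorem exists_isCompact_forall_norm_restrict_compl_le {T : Set E} (hT : TotallyBounded T)
    {ε : ℝ} (hε : 0 < ε) : ∃ S, IsCompact S ∧ ∀ w ∈ T, ‖adm.restrict Sᶜ w‖ ≤ ε := by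
  obtain ⟨t, htfin, hcov⟩ := totallyBounded_iff.1 hT (ε / 2) (half_pos hε)
  choose S hS htail using fun y : E => adm.exists_isCompact_norm_restrict_compl_lt y (half_pos hε)
  refine ⟨⋃ y ∈ t, S y, htfin.isCompact_biUnion fun y _ => hS y, fun w hw => ?_⟩
  obtain ⟨y, hyt, hwy⟩ := mem_iUnion₂.1 (hcov hw)
  have hsub : (⋃ y ∈ t, S y)ᶜ ⊆ (S y)ᶜ := compl_subset_compl.2 (subset_biUnion_of_mem hyt)
  calc ‖adm.restrict (⋃ y ∈ t, S y)ᶜ w‖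
      ≤ ‖adm.restrict (⋃ y ∈ t, S y)ᶜ (w - y)‖ + ‖adm.restrict (⋃ y ∈ t, S y)ᶜ y‖ := by
        rw [restrict_sub]; exact norm_le_norm_sub_add _ _
    _ ≤ ‖w - y‖ + ‖adm.restrict (S y)ᶜ y‖ :=
        add_le_add (adm.norm_restrict_le _ _) (adm.norm_restrict_mono hsub _)
    _ ≤ ε / 2 + ε / 2 := by
        rw [← dist_eq_norm]; exact add_le_add (mem_ball.1 hwy).le (htail y).le
    _ = ε := add_halves ε

noncomputable def pointwiseAbs (z : E) : E :=
  (adm.solid_exists (fun l => (‖adm.emb z l‖ : K)) z fun l => by simp).choose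

theorem emb_pointwiseAbs (z : E) (l : Λ) : adm.emb (adm.pointwiseAbs z) l = ‖adm.emb z l‖ :=
  congrFun (adm.solid_exists (fun l => (‖adm.emb z l‖ : K)) z fun l => by simp).choose_spec.1 l

theorem pointwiseAbs_eq_iff {z v : E} :
    adm.pointwiseAbs z = v ↔ ∀ l, adm.emb v l = ‖adm.emb z l‖ :=
  ⟨fun h l => h ▸ adm.emb_pointwiseAbs z l,
    fun h => adm.inj <| funext fun l => by rw [emb_pointwiseAbs, h]⟩

theorem image_pointwiseAbs (s : Set E) :
    adm.pointwiseAbs '' s = {v | ∃ w ∈ s, ∀ l, adm.emb v l = ‖adm.emb w l‖} := by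
  simp only [image, pointwiseAbs_eq_iff]

theorem norm_pointwiseAbs (z : E) : ‖adm.pointwiseAbs z‖ = ‖z‖ :=
  adm.norm_abs _ _ fun l => by simp [emb_pointwiseAbs]

theorem lipschitzWith_pointwiseAbs : LipschitzWith 1 adm.pointwiseAbs :=
  LipschitzWith.of_dist_le_mul fun z z' => by
    rw [NNReal.coe_one, one_mul, dist_eq_norm, dist_eq_norm]
    refine adm.norm_le_of_forall_norm_le_s14 fun l => ?_
    rw [map_sub, map_sub, Pi.sub_apply, Pi.sub_apply, emb_pointwiseAbs, emb_pointwiseAbs,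
      ← RCLike.ofReal_sub, RCLike.norm_ofReal]
    exact abs_norm_sub_norm_le _ _

theorem norm_restrict_pointwiseAbs (S : Set Λ) (z : E) :
    ‖adm.restrict S (adm.pointwiseAbs z)‖ = ‖adm.restrict S z‖ :=
  adm.norm_abs _ _ fun l => by
    by_cases hl : l ∈ S <;> simp [emb_restrict, emb_pointwiseAbs, hl]

theorem isBounded_of_isBounded_image_pointwiseAbs {s : Set E}
    (hs : Bornology.IsBounded (adm.pointwiseAbs '' s)) : Bornology.IsBounded s := by
  obtain ⟨C, hC⟩ := isBounded_iff_forall_norm_le.1 hs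
  exact isBounded_iff_forall_norm_le.2
    ⟨C, fun w hw => adm.norm_pointwiseAbs w ▸ hC _ (mem_image_of_mem _ hw)⟩

theorem totallyBounded_of_equicontinuous {𝒦 : Set E}
    (hequi : Equicontinuous fun w : 𝒦 => adm.emb w)
    (habs : TotallyBounded (adm.pointwiseAbs '' 𝒦)) : TotallyBounded 𝒦 := by
  rw [totallyBounded_iff]
  intro ε hε
  obtain ⟨S, hS, htail⟩ : ∃ S, IsCompact S ∧ ∀ w ∈ 𝒦, ‖adm.restrict Sᶜ w‖ ≤ ε / 4 := by
    obtain ⟨S, hS, htail⟩ :=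
      adm.exists_isCompact_forall_norm_restrict_compl_le habs (by positivity : 0 < ε / 4)
    exact ⟨S, hS, fun w hw => adm.norm_restrict_pointwiseAbs Sᶜ w ▸ htail _ (mem_image_of_mem _ hw)⟩
  obtain ⟨e, he⟩ := adm.indicator_mem S hS
  set δ := ε / (12 * (‖e‖ + 1)) with hδ_def
  have hδ : 0 < δ := by positivity
  obtain ⟨t, -, ht⟩ := hS.elim_nhds_subcover
    (fun m => {l | ∀ w : 𝒦, dist (adm.emb w m) (adm.emb w l) < δ})
    fun m _ => equicontinuousAt_iff_right.1 (hequi m) δ hδ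
  let V : E →L[K] (t → K) := ContinuousLinearMap.pi fun m => adm.evalCLM m
  have hV : TotallyBounded (V '' 𝒦) := totallyBounded_closure.1 <|
    (V.lipschitz.isBounded_image (adm.isBounded_of_isBounded_image_pointwiseAbs
      habs.isBounded)).isCompact_closure.totallyBounded
  refine exists_finite_cover_ball_of_totallyBounded_image hV hδ fun w hw w' hw' hVww' => ?_
  have hclose : ∀ l ∈ S, ‖adm.emb (w - w') l‖ ≤ 3 * δ := fun l hl => by
    obtain ⟨m, hm, hml⟩ := mem_iUnion₂.1 (ht hl)
    have hwm := hml ⟨w, hw⟩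
    have hw'm := hml ⟨w', hw'⟩
    have hcentre : dist (adm.emb w m) (adm.emb w' m) < δ :=
      (dist_le_pi_dist (V w) (V w') ⟨m, hm⟩).trans_lt hVww'
    rw [map_sub, Pi.sub_apply, ← dist_eq_norm]
    calc dist (adm.emb w l) (adm.emb w' l)
        ≤ dist (adm.emb w l) (adm.emb w m) + dist (adm.emb w m) (adm.emb w' m)
          + dist (adm.emb w' m) (adm.emb w' l) := dist_triangle4 _ _ _ _
      _ ≤ 3 * δ := by rw [dist_comm] at hwm; linarith
  have hδe : 3 * δ * ‖e‖ ≤ ε / 4 := by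
    rw [hδ_def]
    field_simp
    nlinarith [norm_nonneg e]
  calc dist w w' = ‖adm.restrict S (w - w') + (adm.restrict Sᶜ w - adm.restrict Sᶜ w')‖ := by
        rw [dist_eq_norm, ← restrict_sub, restrict_add_restrict_compl]
    _ ≤ 3 * δ * ‖e‖ + (ε / 4 + ε / 4) :=
        norm_add_le_of_le (adm.norm_restrict_le_mul_of_forall_norm_le he (by positivity) hclose)
          (norm_sub_le_of_le (htail w hw) (htail w' hw'))
    _ < ε := by linarith

end AdmissibleEmbedding

theorem stmt_14_general {K Λ E : Type} [RCLike K] [TopologicalSpace Λ]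
    [NormedAddCommGroup E] [NormedSpace K E] [CompleteSpace E]
    (adm : AdmissibleEmbedding K Λ E) (𝒦 : Set E)
    (hequi : ∀ ε : ℝ, 0 < ε → ∀ l : Λ, ∃ U ∈ nhds l, ∀ μ ∈ U, ∀ w ∈ 𝒦,
      ‖adm.emb w μ - adm.emb w l‖ ≤ ε) :
    IsCompact (closure 𝒦) ↔
      IsCompact (closure {w2 : E | ∃ w ∈ 𝒦, ∀ l, adm.emb w2 l = (‖adm.emb w l‖ : K)}) := by
  have hequi' : Equicontinuous fun w : 𝒦 => adm.emb w := fun l =>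
    equicontinuousAt_iff_right.2 fun ε hε => by
      obtain ⟨U, hU, hUε⟩ := hequi (ε / 2) (half_pos hε) l
      filter_upwards [hU] with μ hμ w
      rw [dist_comm, dist_eq_norm]
      exact (hUε μ hμ w w.2).trans_lt (half_lt_self hε)
  rw [← adm.image_pointwiseAbs, isCompact_closure_iff_totallyBounded,
    isCompact_closure_iff_totallyBounded]
  exact ⟨fun h => h.image adm.lipschitzWith_pointwiseAbs.uniformContinuous,
    adm.totallyBounded_of_equicontinuous hequi'⟩

/-- A strongly equicontinuous family `𝒦` in an admissible Banach space is relatively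
compact if and only if the family `|𝒦|` of its pointwise absolute values is relatively
compact. -/
theorem stmt_14 {K Λ E : Type} [RCLike K] [TopologicalSpace Λ] [SigmaCompactSpace Λ]
    [NormedAddCommGroup E] [NormedSpace K E] [CompleteSpace E]
    (adm : AdmissibleEmbedding K Λ E) (𝒦 : Set E)
    (hequi : ∀ ε : ℝ, 0 < ε → ∀ l : Λ, ∃ U ∈ nhds l, ∀ μ ∈ U, ∀ w ∈ 𝒦,
      ‖adm.emb w μ - adm.emb w l‖ ≤ ε) :
    IsCompact (closure 𝒦) ↔
      IsCompact (closure {w2 : E | ∃ w ∈ 𝒦, ∀ l, adm.emb w2 l = (‖adm.emb w l‖ : K)}) :=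
  stmt_14_general adm 𝒦 hequi
end

section
/- Let H = {f ∈ L²(ℝ,ℝ) : supp f̂ ⊆ [-π,π]} and let Λ ⊆ ℝ be any set. If Λ is a uniqueness set for PW^{1,4π}_ℝ, then the family of point evaluations (δ_λ)_{λ∈Λ} satisfies the complement property on H. -/
/-- If an entire function vanishes frequently near 0 along reals hitting zero... helper:
an entire function vanishing on all of ℝ vanishes on ℂ. -/
lemma entire_zero_of_real_zero (F : ℂ → ℂ) (hF : Differentiable ℂ F)
    (h : ∀ x : ℝ, F x = 0) : ∀ z : ℂ, F z = 0 := by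
  have hA : AnalyticOnNhd ℂ F Set.univ := (Complex.analyticOnNhd_univ_iff_differentiable.mpr hF)
  have htend : Filter.Tendsto (fun n : ℕ => ((1 / (n + 1) : ℝ) : ℂ)) Filter.atTop
      (nhdsWithin (0 : ℂ) {(0 : ℂ)}ᶜ) := by
    rw [tendsto_nhdsWithin_iff]
    constructor
    · have : Filter.Tendsto (fun n : ℕ => (1 / (n + 1) : ℝ)) Filter.atTop (nhds 0) :=
        tendsto_one_div_add_atTop_nhds_zero_nat
      have h2 := (Complex.continuous_ofReal.tendsto 0).comp this
      simpa only [Function.comp_def, Complex.ofReal_zero] using h2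
    · filter_upwards with n
      simp only [Set.mem_compl_iff, Set.mem_singleton_iff]
      intro hc
      have : (1 / (n + 1) : ℝ) = 0 := by exact_mod_cast hc
      have hn : (0 : ℝ) < 1 / (n + 1) := by positivity
      linarith
  have hfreq : ∃ᶠ z in nhdsWithin (0 : ℂ) {(0 : ℂ)}ᶜ, F z = 0 :=
    htend.frequently (Filter.Frequently.of_forall fun n => h _)
  have := hA.eqOn_zero_of_preconnected_of_frequently_eq_zero isPreconnected_univ
    (Set.mem_univ (0 : ℂ)) hfreq
  intro z; exact this (Set.mem_univ z)

/-- Let `H` be the space of real band-limited `L²` functions (band `[-π,π]`), described by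
the relevant properties: its members are determined by their pointwise values, extend to
entire functions, and products of two members lie in `PW := PW^{1,4π}_ℝ`. If `Λ ⊆ ℝ` is a
uniqueness set for `PW`, then the family of point evaluations `(δ_λ)_{λ∈Λ}` satisfies the
complement property on `H`. -/
theorem stmt_19 (H PW : Set (ℝ → ℝ)) (Λ : Set ℝ)
    (hent : ∀ f ∈ H, ∃ F : ℂ → ℂ, Differentiable ℂ F ∧ ∀ x : ℝ, F x = f x)
    (hprod : ∀ f ∈ H, ∀ g ∈ H, f * g ∈ PW)
    (huniq : ∀ h ∈ PW, (∀ l ∈ Λ, h l = 0) → h = 0) :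
    ∀ S ⊆ Λ,
      (∀ f ∈ H, (∀ l ∈ S, f l = 0) → f = 0) ∨
      (∀ f ∈ H, (∀ l ∈ Λ \ S, f l = 0) → f = 0) := by
  intro S hSΛ
  by_contra hcon
  push_neg at hcon
  obtain ⟨⟨u, huH, huS, hu0⟩, ⟨v, hvH, hvΛS, hv0⟩⟩ := hcon
  -- u*v vanishes on Λ
  have huv : u * v = 0 := by
    apply huniq _ (hprod u huH v hvH)
    intro l hl
    by_cases hls : l ∈ S
    · simp [Pi.mul_apply, huS l hls]
    · simp [Pi.mul_apply, hvΛS l ⟨hl, hls⟩]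
  obtain ⟨F, hF, hFu⟩ := hent u huH
  obtain ⟨G, hG, hGv⟩ := hent v hvH
  -- F*G vanishes on ℝ, hence on ℂ
  have hFG : ∀ z : ℂ, F z * G z = 0 := by
    apply entire_zero_of_real_zero _ (hF.mul hG)
    intro x
    have : u x * v x = 0 := by
      have := congrFun huv x; simpa using this
    rw [Pi.mul_apply, hFu, hGv]
    exact_mod_cast this
  -- u ≠ 0, so F is nonzero somewhere on ℝ
  have hux : ∃ x : ℝ, u x ≠ 0 := by
    by_contra h
    push_neg at h
    exact hu0 (funext h)
  obtain ⟨x0, hx0⟩ := hux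
  have hFx0 : F x0 ≠ 0 := by
    rw [hFu]; exact_mod_cast hx0
  -- F ≠ 0 near x0, so G = 0 near x0, so G ≡ 0
  have hGA : AnalyticOnNhd ℂ G Set.univ := (Complex.analyticOnNhd_univ_iff_differentiable.mpr hG)
  have hev : ∀ᶠ z in nhds (x0 : ℂ), G z = 0 := by
    have hcont : ContinuousAt F (x0 : ℂ) := hF.continuous.continuousAt
    have hne : ∀ᶠ z in nhds (x0 : ℂ), F z ≠ 0 :=
      hcont.eventually_ne hFx0
    filter_upwards [hne] with z hz
    have := hFG z
    exact (mul_eq_zero.mp this).resolve_left hz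
  have hG0 : Set.EqOn G 0 Set.univ :=
    hGA.eqOn_zero_of_preconnected_of_eventuallyEq_zero isPreconnected_univ
      (Set.mem_univ (x0 : ℂ)) hev
  apply hv0
  funext x
  have h3 : ((v x : ℂ)) = 0 := by
    rw [← hGv]
    simpa using hG0 (Set.mem_univ (x : ℂ))
  exact_mod_cast h3
end
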